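/- Let 𝒢 be a groupoid with 𝒢₀ finite, X a finite split 𝒢-set via α=(X_g,α_g)_{g∈𝒢} such that the action α is transitive, and A a unital 𝒢-graded algebra. Let I_𝒢(X) be the groupoid of partial bijections ρ of X whose domain and image are α-invariant and which are morphisms of 𝒢-sets, acting on X by β_ρ = ρ on Y_ρ = im(ρ). Then this action of I_𝒢(X) on X is fully faithful, and there is an isomorphism of algebras (A #_α^𝒢 X) *_γ I_𝒢(X) ≅ End((A #_α^𝒢 X)_{A #_λ^𝒢 O}), where O is the set of orbits of X under I_𝒢(X) with its induced 𝒢-action λ, γ is the induced action of I_𝒢(X) on A #_α^𝒢 X, and End denotes endomorphisms of A #_α^𝒢 X as a right A #_λ^𝒢 O-module via the embedding induced by the orbit map. -/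

import Mathlib

open scoped Classical

noncomputable section

universe u v w

/-- A groupoid, presented as a set of morphisms with partially defined
composition.  `s g` is the domain (source) identity `d(g)`, `t g` the range
(target) identity `r(g)`; `mul g h` is the composite `gh`, meaningful when
`s g = t h`. -/
structure Gpd (G : Type u) where
  s : G → G
  t : G → G
  inv : G → G
  mul : G → G → G
  s_s : ∀ g, s (s g) = s g
  t_s : ∀ g, t (s g) = s g
  s_t : ∀ g, s (t g) = t g
  t_t : ∀ g, t (t g) = t g
  s_mul : ∀ g h, s g = t h → s (mul g h) = s h
  t_mul : ∀ g h, s g = t h → t (mul g h) = t g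
  mul_assoc : ∀ g h l, s g = t h → s h = t l → mul (mul g h) l = mul g (mul h l)
  mul_src : ∀ g, mul g (s g) = g
  tgt_mul : ∀ g, mul (t g) g = g
  s_inv : ∀ g, s (inv g) = t g
  t_inv : ∀ g, t (inv g) = s g
  inv_mul : ∀ g, mul (inv g) g = s g
  mul_inv : ∀ g, mul g (inv g) = t g

namespace Gpd

variable {G : Type u}

/-- `e` is an object (identity) of the groupoid. -/
def obj (𝒢 : Gpd G) (e : G) : Prop := 𝒢.s e = e

/-- The set `𝒢₀` of objects of the groupoid. -/
def Objs (𝒢 : Gpd G) : Set G := {e | 𝒢.obj e}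

end Gpd

/-- An action `α = (X_g, α_g)` of a groupoid `𝒢` on a set `X`:
`car g` is the subset `X_g` and `act g` restricts to the bijection
`α_g : X_{g⁻¹} → X_g`. -/
structure GpdSetAction {G : Type u} (𝒢 : Gpd G) (X : Type v) where
  car : G → Set X
  act : G → X → X
  car_t : ∀ g, car g = car (𝒢.t g)
  bijOn : ∀ g, Set.BijOn (act g) (car (𝒢.inv g)) (car g)
  act_id : ∀ e, 𝒢.obj e → ∀ x ∈ car e, act e x = x
  act_mul : ∀ g h, 𝒢.s g = 𝒢.t h → ∀ x ∈ car (𝒢.inv h),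
    act g (act h x) = act (𝒢.mul g h) x

/-- `X` is a split `𝒢`-set: `X` is the disjoint union of the `X_e`, `e ∈ 𝒢₀`. -/
def GpdSetAction.Split {G : Type u} {𝒢 : Gpd G} {X : Type v} (α : GpdSetAction 𝒢 X) : Prop :=
  ∀ x : X, ∃! e : G, 𝒢.obj e ∧ x ∈ α.car e

/-- The action is fully faithful: if `α_g` fixes some `x ∈ X_g ∩ X_{g⁻¹}`
then `g` is an identity. -/
def GpdSetAction.FullyFaithful {G : Type u} {𝒢 : Gpd G} {X : Type v}
    (α : GpdSetAction 𝒢 X) : Prop :=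
  ∀ g x, x ∈ α.car g ∩ α.car (𝒢.inv g) → α.act g x = x → 𝒢.obj g

/-- A `𝒢`-grading of the `k`-algebra `A`:  `A = ⊕_{g ∈ 𝒢} A_g` with
`A_g A_h ⊆ A_{gh}` for composable `g, h` and `A_g A_h = 0` otherwise. -/
structure GpdGrading {G : Type u} (𝒢 : Gpd G) (k : Type v) (A : Type w)
    [Field k] [Ring A] [Algebra k A] where
  comp : G → Submodule k A
  internal : DirectSum.IsInternal comp
  mul_mem : ∀ g h, 𝒢.s g = 𝒢.t h → ∀ a ∈ comp g, ∀ b ∈ comp h, a * b ∈ comp (𝒢.mul g h)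
  mul_eq_zero : ∀ g h, 𝒢.s g ≠ 𝒢.t h → ∀ a ∈ comp g, ∀ b ∈ comp h, a * b = 0

/-- The homogeneous component of degree `g` of `a ∈ A`. -/
noncomputable def GpdGrading.proj {G : Type u} {𝒢 : Gpd G} {k : Type v} {A : Type w}
    [Field k] [Ring A] [Algebra k A] (𝒜 : GpdGrading 𝒢 k A) (g : G) (a : A) : A :=
  ((Equiv.ofBijective _ 𝒜.internal).symm a g : A)

/-- `one : G → A` is a family of local units for the grading: each `one e`
(`e ∈ 𝒢₀`) is an identity element of `A_e` and `1_A = Σ_{e ∈ 𝒢₀} 1_e`. -/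
def IsIdFamily {G : Type u} {𝒢 : Gpd G} {k : Type v} {A : Type w}
    [Field k] [Ring A] [Algebra k A] (𝒜 : GpdGrading 𝒢 k A) (one : G → A) : Prop :=
  (∀ e, 𝒢.obj e → one e ∈ 𝒜.comp e ∧ ∀ a ∈ 𝒜.comp e, one e * a = a ∧ a * one e = a) ∧
  (1 : A) = ∑ᶠ e ∈ 𝒢.Objs, one e

/-- The multiplication of the smash product `A #_α^𝒢 X`, defined on the
ambient space of formal sums `Σ a_{(g,x)} δ_{(g,x)}`:
`(a δ_{(g,x)}) (b δ_{(h,y)}) = (a b) δ_{(gh, y)}` when `d(g) = r(h)` and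
`α_h(y) = x`, and `0` otherwise. -/
noncomputable def smashMul {G : Type u} {𝒢 : Gpd G} {X : Type v} {A : Type w} [Ring A]
    (α : GpdSetAction 𝒢 X) (f₁ f₂ : (G × X) →₀ A) : (G × X) →₀ A :=
  f₁.sum fun p a => f₂.sum fun q b =>
    if 𝒢.s p.1 = 𝒢.t q.1 ∧ α.act q.1 q.2 = p.2
    then Finsupp.single (𝒢.mul p.1 q.1, q.2) (a * b) else 0

/-- The underlying set of the smash product `A #_α^𝒢 X = ⊕_{g} ⊕_{x ∈ X_{d(g)}} A_g δ_x`: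
those formal sums whose `(g,x)`-coefficient lies in `A_g`, supported on pairs
with `x ∈ X_{d(g)}`. -/
def smashSet {G : Type u} {𝒢 : Gpd G} {X : Type v} {k : Type*} {A : Type w}
    [Field k] [Ring A] [Algebra k A]
    (α : GpdSetAction 𝒢 X) (𝒜 : GpdGrading 𝒢 k A) : Set ((G × X) →₀ A) :=
  {f | ∀ p : G × X, f p ∈ 𝒜.comp p.1 ∧ (f p ≠ 0 → p.2 ∈ α.car (𝒢.s p.1))}

/-- The identity element `Σ_{e ∈ 𝒢₀} Σ_{x ∈ X_e} 1_e δ_x` of the smash product. -/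
noncomputable def smashOne {G : Type u} {𝒢 : Gpd G} {X : Type v} {A : Type w} [Ring A]
    (α : GpdSetAction 𝒢 X) (one : G → A) : (G × X) →₀ A :=
  ∑ᶠ e ∈ 𝒢.Objs, ∑ᶠ x ∈ α.car e, Finsupp.single ((e, x) : G × X) (one e)

/-- `X` is a `(𝒢_α, 𝒦_β)`-set:  each `Y_k` is `α`-invariant, each `X_g` is
`β`-invariant, and the two actions commute. -/
structure GKCompat {G : Type u} {K : Type*} {𝒢 : Gpd G} {𝒦 : Gpd K} {X : Type v}
    (α : GpdSetAction 𝒢 X) (β : GpdSetAction 𝒦 X) : Prop where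
  alpha_inv : ∀ g κ, α.act g '' (α.car (𝒢.inv g) ∩ β.car κ) ⊆ α.car g ∩ β.car κ
  beta_inv : ∀ g κ, β.act κ '' (α.car g ∩ β.car (𝒦.inv κ)) ⊆ α.car g ∩ β.car κ
  comm : ∀ g κ x, x ∈ α.car (𝒢.inv g) ∩ β.car (𝒦.inv κ) →
    α.act g (β.act κ x) = β.act κ (α.act g x)

/-- The ideal `E_k = A #^𝒢_{θ^k} Y_k = ⊕_g ⊕_{x ∈ Y_k ∩ X_{d(g)}} A_g δ_x`
of the smash product `A #_α^𝒢 X`. -/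
def Eset {G : Type u} {K : Type*} {𝒢 : Gpd G} {𝒦 : Gpd K} {X : Type v}
    {k : Type*} {A : Type w} [Field k] [Ring A] [Algebra k A]
    (α : GpdSetAction 𝒢 X) (β : GpdSetAction 𝒦 X) (𝒜 : GpdGrading 𝒢 k A)
    (κ : K) : Set ((G × X) →₀ A) :=
  {f | f ∈ smashSet α 𝒜 ∧ ∀ p : G × X, f p ≠ 0 → p.2 ∈ β.car κ}

/-- The map `γ_k : E_{k⁻¹} → E_k`, `γ_k(a_g δ_y) = a_g δ_{β_k(y)}`. -/
noncomputable def gammaAct {G : Type u} {K : Type*} {𝒦 : Gpd K} {X : Type v} {A : Type w}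
    [Ring A] (β : GpdSetAction 𝒦 X) (κ : K) (f : (G × X) →₀ A) : (G × X) →₀ A :=
  f.sum fun p a =>
    if p.2 ∈ β.car (𝒦.inv κ) then Finsupp.single ((p.1, β.act κ p.2) : G × X) a else 0

/-- The identity element `𝟏_k = Σ_{e ∈ 𝒢₀} Σ_{x ∈ Y_k ∩ X_e} 1_e δ_x` of `E_k`. -/
noncomputable def OneE {G : Type u} {K : Type*} {𝒢 : Gpd G} {𝒦 : Gpd K} {X : Type v}
    {A : Type w} [Ring A]
    (α : GpdSetAction 𝒢 X) (β : GpdSetAction 𝒦 X) (one : G → A) (κ : K) : (G × X) →₀ A :=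
  ∑ᶠ e ∈ 𝒢.Objs, ∑ᶠ x ∈ (β.car κ ∩ α.car e), Finsupp.single ((e, x) : G × X) (one e)

/-- The `𝒦`-orbit `o(x) = {β_k(x) : k ∈ D_p}` of `x ∈ Y_p`. -/
def orbit {K : Type*} {𝒦 : Gpd K} {X : Type v} (β : GpdSetAction 𝒦 X) (x : X) : Set X :=
  {y | ∃ κ, x ∈ β.car (𝒦.inv κ) ∧ β.act κ x = y}

/-- The set `O^𝒦` of `𝒦`-orbits of `X`. -/
abbrev OrbT {K : Type*} {𝒦 : Gpd K} {X : Type v} (β : GpdSetAction 𝒦 X) : Type v :=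
  {o : Set X // ∃ x, orbit β x = o}

/-- The orbit map `φ : X → O^𝒦`, `φ(x) = o(x)`. -/
def orbMap {K : Type*} {𝒦 : Gpd K} {X : Type v} (β : GpdSetAction 𝒦 X) (x : X) : OrbT β :=
  ⟨orbit β x, ⟨x, rfl⟩⟩

/-- The monomorphism `φ* : A #_λ^𝒢 O^𝒦 → A #_α^𝒢 X` induced by the orbit map,
`φ*(a_g δ_{o(x)}) = Σ_{y ∈ X_{d(g)}, o(y) = o(x)} a_g δ_y`. -/
noncomputable def phiStar {G : Type u} {K : Type*} {𝒢 : Gpd G} {𝒦 : Gpd K} {X : Type v}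
    {A : Type w} [Ring A] (α : GpdSetAction 𝒢 X) (β : GpdSetAction 𝒦 X)
    (f : (G × OrbT β) →₀ A) : (G × X) →₀ A :=
  f.sum fun p a =>
    ∑ᶠ y ∈ {y | y ∈ α.car (𝒢.s p.1) ∧ orbit β y = (p.2 : Set X)},
      Finsupp.single ((p.1, y) : G × X) a

/-- The subalgebra of invariants `(A #_α^𝒢 X)^γ`:  all `b` in the smash
product with `γ_k(b 𝟏_{k⁻¹}) = b 𝟏_k` for every `k ∈ 𝒦`. -/
noncomputable def invariantSet {G : Type u} {K : Type*} {𝒢 : Gpd G} {𝒦 : Gpd K} {X : Type v}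
    {k : Type*} {A : Type w} [Field k] [Ring A] [Algebra k A]
    (α : GpdSetAction 𝒢 X) (β : GpdSetAction 𝒦 X) (𝒜 : GpdGrading 𝒢 k A)
    (one : G → A) : Set ((G × X) →₀ A) :=
  {f | f ∈ smashSet α 𝒜 ∧ ∀ κ : K,
    gammaAct β κ (smashMul α f (OneE α β one (𝒦.inv κ))) = smashMul α f (OneE α β one κ)}

/-- The multiplication of the skew groupoid ring `(A #_α^𝒢 X) *_γ 𝒦`,
given on formal sums `Σ_k x_k δ_k` (with `x_k ∈ E_k`) by
`(x δ_k)(y δ_l) = x γ_k(y) δ_{kl}` when `d(k) = r(l)` and `0` otherwise. -/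
noncomputable def skewMul {G : Type u} {K : Type*} {𝒢 : Gpd G} {𝒦 : Gpd K} {X : Type v}
    {A : Type w} [Ring A] (α : GpdSetAction 𝒢 X) (β : GpdSetAction 𝒦 X)
    (F₁ F₂ : K →₀ ((G × X) →₀ A)) : K →₀ ((G × X) →₀ A) :=
  F₁.sum fun κ x => F₂.sum fun l y =>
    if 𝒦.s κ = 𝒦.t l then Finsupp.single (𝒦.mul κ l) (smashMul α x (gammaAct β κ y)) else 0

/-- The underlying set of the skew groupoid ring
`(A #_α^𝒢 X) *_γ 𝒦 = ⊕_{k ∈ 𝒦} E_k δ_k`. -/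
def skewSet {G : Type u} {K : Type*} {𝒢 : Gpd G} {𝒦 : Gpd K} {X : Type v}
    {k : Type*} {A : Type w} [Field k] [Ring A] [Algebra k A]
    (α : GpdSetAction 𝒢 X) (β : GpdSetAction 𝒦 X) (𝒜 : GpdGrading 𝒢 k A) :
    Set (K →₀ ((G × X) →₀ A)) :=
  {F | ∀ κ, F κ ∈ Eset α β 𝒜 κ}

/-- `F` represents an endomorphism of `A #_α^𝒢 X` as a right
`A #_λ^𝒢 O^𝒦`-module (the right action being given through the embedding
`φ*`). -/
def IsRModEnd {G : Type u} {K : Type*} {𝒢 : Gpd G} {𝒦 : Gpd K} {X : Type v}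
    {k : Type*} {A : Type w} [Field k] [Ring A] [Algebra k A]
    (α : GpdSetAction 𝒢 X) (β : GpdSetAction 𝒦 X) (𝒜 : GpdGrading 𝒢 k A)
    (lam : GpdSetAction 𝒢 (OrbT β))
    (F : ((G × X) →₀ A) → ((G × X) →₀ A)) : Prop :=
  (∀ f ∈ smashSet α 𝒜, F f ∈ smashSet α 𝒜) ∧
  (∀ f₁ ∈ smashSet α 𝒜, ∀ f₂ ∈ smashSet α 𝒜, F (f₁ + f₂) = F f₁ + F f₂) ∧
  (∀ (c : k), ∀ f ∈ smashSet α 𝒜, F (c • f) = c • F f) ∧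
  (∀ f ∈ smashSet α 𝒜, ∀ w ∈ smashSet lam 𝒜,
    F (smashMul α f (phiStar α β w)) = smashMul α (F f) (phiStar α β w))

/-- There is an isomorphism of algebras
`(A #_α^𝒢 X) *_γ 𝒦 ≅ End((A #_α^𝒢 X)_{A #_λ^𝒢 O^𝒦})`. -/
def SmashDuality {G : Type u} {K : Type*} {𝒢 : Gpd G} {𝒦 : Gpd K} {X : Type v}
    (k : Type*) {A : Type w} [Field k] [Ring A] [Algebra k A]
    (α : GpdSetAction 𝒢 X) (β : GpdSetAction 𝒦 X) (𝒜 : GpdGrading 𝒢 k A)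
    (lam : GpdSetAction 𝒢 (OrbT β)) : Prop :=
  ∃ Ψ : (K →₀ ((G × X) →₀ A)) → ((G × X) →₀ A) → ((G × X) →₀ A),
    -- Ψ maps the skew groupoid ring into the endomorphism algebra
    (∀ F ∈ skewSet α β 𝒜, IsRModEnd α β 𝒜 lam (Ψ F)) ∧
    -- Ψ is k-linear
    (∀ F₁ ∈ skewSet α β 𝒜, ∀ F₂ ∈ skewSet α β 𝒜, ∀ f ∈ smashSet α 𝒜,
      Ψ (F₁ + F₂) f = Ψ F₁ f + Ψ F₂ f) ∧
    (∀ (c : k), ∀ F ∈ skewSet α β 𝒜, ∀ f ∈ smashSet α 𝒜, Ψ (c • F) f = c • Ψ F f) ∧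
    -- Ψ is multiplicative (composition of endomorphisms)
    (∀ F₁ ∈ skewSet α β 𝒜, ∀ F₂ ∈ skewSet α β 𝒜, ∀ f ∈ smashSet α 𝒜,
      Ψ (skewMul α β F₁ F₂) f = Ψ F₁ (Ψ F₂ f)) ∧
    -- Ψ is injective
    (∀ F₁ ∈ skewSet α β 𝒜, ∀ F₂ ∈ skewSet α β 𝒜,
      (∀ f ∈ smashSet α 𝒜, Ψ F₁ f = Ψ F₂ f) → F₁ = F₂) ∧
    -- Ψ is surjective onto the endomorphism algebra
    (∀ F : ((G × X) →₀ A) → ((G × X) →₀ A), IsRModEnd α β 𝒜 lam F →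
      ∃ Fs ∈ skewSet α β 𝒜, ∀ f ∈ smashSet α 𝒜, Ψ Fs f = F f)

/-- `ρ ⊆ X × X` is (the graph of) a partial bijection of `X`. -/
def IsPartialBij {X : Type v} (ρ : Set (X × X)) : Prop :=
  (∀ p ∈ ρ, ∀ q ∈ ρ, p.1 = q.1 → p.2 = q.2) ∧
  (∀ p ∈ ρ, ∀ q ∈ ρ, p.2 = q.2 → p.1 = q.1)

/-- A subset `Y ⊆ X` is `α`-invariant: `α_g(Y ∩ X_{g⁻¹}) ⊆ Y ∩ X_g`. -/
def AlphaInvariant {G : Type u} {𝒢 : Gpd G} {X : Type v} (α : GpdSetAction 𝒢 X)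
    (Y : Set X) : Prop :=
  ∀ g, α.act g '' (Y ∩ α.car (𝒢.inv g)) ⊆ Y ∩ α.car g

/-- `ρ` is an element of the groupoid `I_𝒢(X)`: a partial bijection of `X`
whose domain and image are `α`-invariant and which is a morphism of
`𝒢`-sets. -/
def IsIGElem {G : Type u} {𝒢 : Gpd G} {X : Type v} (α : GpdSetAction 𝒢 X)
    (ρ : Set (X × X)) : Prop :=
  IsPartialBij ρ ∧
  AlphaInvariant α (Prod.fst '' ρ) ∧
  AlphaInvariant α (Prod.snd '' ρ) ∧
  -- `ρ` preserves the pieces `X_g` of the `𝒢`-set `X`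
  (∀ p ∈ ρ, ∀ g, p.1 ∈ α.car g → p.2 ∈ α.car g) ∧
  -- `ρ` commutes with the action of `𝒢` where defined
  (∀ p ∈ ρ, ∀ g, p.1 ∈ α.car (𝒢.inv g) → (α.act g p.1, α.act g p.2) ∈ ρ)


/-!
Transitivity forces every `α`-invariant subset of `X` to be empty or all of `X`. So an element of
`I_𝒢(X)` is either the empty relation or the graph of a `𝒢`-equivariant permutation of `X`, and
the nonempty ones form one group acting freely on `X`: an equivariant permutation fixing a point
fixes every point. For such an action `Σ F_κ δ_κ` acts on the smash product by
`f ↦ Σ F_κ γ_κ(f)`. This is right `A #_λ O`-linear because each `γ_κ` is `𝒢`-equivariant and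
preserves orbits, and multiplicative because `γ_κ(m γ_l(f)) = γ_κ(m) γ_{κl}(f)`. Evaluating at the
local units `1_e δ_y` recovers each `F_κ`, freeness singling out `κ`. Conversely, since
`a δ_x = (1_{r(g)} δ_{α_g x}) φ*(a δ_{o(x)})` for `a ∈ A_g`, a module endomorphism is determined
by its values on the local units, and the columns of those values are the coefficients `F_κ`.
-/

namespace Gpd

variable {G : Type u} (𝒢 : Gpd G)

lemma obj_s (g : G) : 𝒢.obj (𝒢.s g) := 𝒢.s_s g

lemma obj_t (g : G) : 𝒢.obj (𝒢.t g) := 𝒢.s_t g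

lemma t_obj {e : G} (he : 𝒢.obj e) : 𝒢.t e = e := by
  have := 𝒢.t_s e; rwa [he] at this

lemma mul_obj_left {g e : G} (h : 𝒢.t g = e) : 𝒢.mul e g = g := by
  have := 𝒢.tgt_mul g; rwa [h] at this

lemma eq_src_of_mul_eq {d h : G} (hc : 𝒢.s d = 𝒢.t h) (hm : 𝒢.mul d h = d) : h = 𝒢.s d :=
  calc h = 𝒢.mul (𝒢.s d) h := (𝒢.mul_obj_left hc.symm).symm
    _ = 𝒢.mul (𝒢.mul (𝒢.inv d) d) h := by rw [𝒢.inv_mul]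
    _ = 𝒢.mul (𝒢.inv d) (𝒢.mul d h) := 𝒢.mul_assoc _ _ _ (𝒢.s_inv d) hc
    _ = 𝒢.mul (𝒢.inv d) d := by rw [hm]
    _ = 𝒢.s d := 𝒢.inv_mul d

lemma eq_tgt_of_mul_eq {d h : G} (hc : 𝒢.s h = 𝒢.t d) (hm : 𝒢.mul h d = d) : h = 𝒢.t d :=
  calc h = 𝒢.mul h (𝒢.s h) := (𝒢.mul_src h).symm
    _ = 𝒢.mul h (𝒢.mul d (𝒢.inv d)) := by rw [hc, 𝒢.mul_inv]
    _ = 𝒢.mul (𝒢.mul h d) (𝒢.inv d) := (𝒢.mul_assoc _ _ _ hc (𝒢.t_inv d).symm).symm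
    _ = 𝒢.mul d (𝒢.inv d) := by rw [hm]
    _ = 𝒢.t d := 𝒢.mul_inv d

lemma eq_of_obj_inv_mul {κ l : G} (ht : 𝒢.t l = 𝒢.t κ) (h : 𝒢.obj (𝒢.mul (𝒢.inv l) κ)) :
    κ = l := by
  have hc : 𝒢.s (𝒢.inv l) = 𝒢.t κ := by rw [𝒢.s_inv, ht]
  have hτ : 𝒢.mul (𝒢.inv l) κ = 𝒢.s κ := by
    have h' : 𝒢.s (𝒢.mul (𝒢.inv l) κ) = 𝒢.mul (𝒢.inv l) κ := h
    rw [← h', 𝒢.s_mul _ _ hc]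
  have hsl : 𝒢.s l = 𝒢.s κ := by
    have := congrArg 𝒢.t hτ
    rwa [𝒢.t_mul _ _ hc, 𝒢.t_inv, 𝒢.t_s] at this
  calc κ = 𝒢.mul (𝒢.t l) κ := (𝒢.mul_obj_left ht.symm).symm
    _ = 𝒢.mul (𝒢.mul l (𝒢.inv l)) κ := by rw [𝒢.mul_inv]
    _ = 𝒢.mul l (𝒢.mul (𝒢.inv l) κ) := 𝒢.mul_assoc _ _ _ (𝒢.t_inv l).symm hc
    _ = 𝒢.mul l (𝒢.s l) := by rw [hτ, hsl]
    _ = l := 𝒢.mul_src l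

end Gpd

namespace GpdGrading

variable {G : Type u} {k : Type*} {A : Type w} [Field k] [Ring A] [Algebra k A]
  {𝒢 : Gpd G} (𝒜 : GpdGrading 𝒢 k A)

lemma proj_mem (g : G) (a : A) : 𝒜.proj g a ∈ 𝒜.comp g :=
  SetLike.coe_mem _

lemma proj_of_mem {g : G} {a : A} (ha : a ∈ 𝒜.comp g) :
    𝒜.proj g a = a ∧ ∀ h, h ≠ g → 𝒜.proj h a = 0 := by
  have hsymm : (Equiv.ofBijective _ 𝒜.internal).symm a
      = DirectSum.of (fun i => (𝒜.comp i : Submodule k A)) g ⟨a, ha⟩ := by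
    apply (Equiv.ofBijective _ 𝒜.internal).injective
    rw [Equiv.apply_symm_apply]
    exact (DirectSum.coeAddMonoidHom_of 𝒜.comp g ⟨a, ha⟩).symm
  constructor
  · show ((((Equiv.ofBijective _ 𝒜.internal).symm a) g : 𝒜.comp g) : A) = a
    rw [hsymm, DirectSum.of_eq_same]
  · intro h hh
    show ((((Equiv.ofBijective _ 𝒜.internal).symm a) h : 𝒜.comp h) : A) = 0
    rw [hsymm, DirectSum.of_eq_of_ne _ _ _ hh]
    rfl

lemma proj_eq_self {g : G} {a : A} (ha : a ∈ 𝒜.comp g) : 𝒜.proj g a = a :=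
  (𝒜.proj_of_mem ha).1

lemma proj_eq_zero {g h : G} {a : A} (ha : a ∈ 𝒜.comp g) (hh : h ≠ g) : 𝒜.proj h a = 0 :=
  (𝒜.proj_of_mem ha).2 h hh

lemma proj_zero (g : G) : 𝒜.proj g (0 : A) = 0 :=
  𝒜.proj_eq_self (Submodule.zero_mem (𝒜.comp g))

lemma proj_add (g : G) (a b : A) : 𝒜.proj g (a + b) = 𝒜.proj g a + 𝒜.proj g b := by
  have := map_add (AddEquiv.ofBijective (DirectSum.coeAddMonoidHom 𝒜.comp) 𝒜.internal).symm a b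
  exact congrArg (fun d => ((d g : 𝒜.comp g) : A)) this

lemma proj_finset_sum {ι : Type*} (s : Finset ι) (f : ι → A) (g : G) :
    𝒜.proj g (∑ i ∈ s, f i) = ∑ i ∈ s, 𝒜.proj g (f i) :=
  map_sum (AddMonoidHom.mk' (𝒜.proj g) (𝒜.proj_add g)) f s

lemma exists_decomp (a : A) :
    ∃ s : Finset G, (∀ g ∉ s, 𝒜.proj g a = 0) ∧ ∑ g ∈ s, 𝒜.proj g a = a := by
  set d := (Equiv.ofBijective _ 𝒜.internal).symm a with hd
  refine ⟨DFinsupp.support d, fun g hg => ?_, ?_⟩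
  · show ((d g : 𝒜.comp g) : A) = 0
    rw [DFinsupp.notMem_support_iff.mp hg]; rfl
  · have h1 : DirectSum.coeAddMonoidHom 𝒜.comp d = a := by
      show (Equiv.ofBijective _ 𝒜.internal) d = a
      rw [hd, Equiv.apply_symm_apply]
    calc ∑ g ∈ DFinsupp.support d, 𝒜.proj g a
        = DFinsupp.sum d (fun _ x => (x : A)) := rfl
      _ = a := by rw [← DirectSum.coeAddMonoidHom_eq_dfinsuppSum, h1]

lemma mul_proj_one {d : G} {a : A} (ha : a ∈ 𝒜.comp d) : a * 𝒜.proj (𝒢.s d) 1 = a := by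
  obtain ⟨s, hs0, hs⟩ := 𝒜.exists_decomp (1 : A)
  have key : ∀ h ∈ s, h ≠ 𝒢.s d → 𝒜.proj d (a * 𝒜.proj h 1) = 0 := by
    intro h _ hh
    by_cases hc : 𝒢.s d = 𝒢.t h
    · refine 𝒜.proj_eq_zero (𝒜.mul_mem d h hc a ha _ (𝒜.proj_mem h 1)) fun hco => ?_
      exact hh (𝒢.eq_src_of_mul_eq hc hco.symm)
    · rw [𝒜.mul_eq_zero d h hc a ha _ (𝒜.proj_mem h 1), 𝒜.proj_zero]
  have hmem : a * 𝒜.proj (𝒢.s d) 1 ∈ 𝒜.comp d := by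
    have := 𝒜.mul_mem d (𝒢.s d) (𝒢.t_s d).symm a ha _ (𝒜.proj_mem _ 1)
    rwa [𝒢.mul_src] at this
  calc a * 𝒜.proj (𝒢.s d) 1 = 𝒜.proj d (a * 𝒜.proj (𝒢.s d) 1) := (𝒜.proj_eq_self hmem).symm
    _ = ∑ h ∈ s, 𝒜.proj d (a * 𝒜.proj h 1) :=
      (Finset.sum_eq_single _ key fun hnot => by rw [hs0 _ hnot, mul_zero, 𝒜.proj_zero]).symm
    _ = a := by rw [← 𝒜.proj_finset_sum, ← Finset.mul_sum, hs, mul_one, 𝒜.proj_eq_self ha]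

lemma proj_one_mul {d : G} {a : A} (ha : a ∈ 𝒜.comp d) : 𝒜.proj (𝒢.t d) 1 * a = a := by
  obtain ⟨s, hs0, hs⟩ := 𝒜.exists_decomp (1 : A)
  have key : ∀ h ∈ s, h ≠ 𝒢.t d → 𝒜.proj d (𝒜.proj h 1 * a) = 0 := by
    intro h _ hh
    by_cases hc : 𝒢.s h = 𝒢.t d
    · refine 𝒜.proj_eq_zero (𝒜.mul_mem h d hc _ (𝒜.proj_mem h 1) a ha) fun hco => ?_
      exact hh (𝒢.eq_tgt_of_mul_eq hc hco.symm)
    · rw [𝒜.mul_eq_zero h d hc _ (𝒜.proj_mem h 1) a ha, 𝒜.proj_zero]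
  have hmem : 𝒜.proj (𝒢.t d) 1 * a ∈ 𝒜.comp d := by
    have := 𝒜.mul_mem (𝒢.t d) d (𝒢.s_t d) _ (𝒜.proj_mem _ 1) a ha
    rwa [𝒢.tgt_mul] at this
  calc 𝒜.proj (𝒢.t d) 1 * a = 𝒜.proj d (𝒜.proj (𝒢.t d) 1 * a) := (𝒜.proj_eq_self hmem).symm
    _ = ∑ h ∈ s, 𝒜.proj d (𝒜.proj h 1 * a) :=
      (Finset.sum_eq_single _ key fun hnot => by rw [hs0 _ hnot, zero_mul, 𝒜.proj_zero]).symm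
    _ = a := by rw [← 𝒜.proj_finset_sum, ← Finset.sum_mul, hs, one_mul, 𝒜.proj_eq_self ha]

end GpdGrading

namespace GpdSetAction

variable {G : Type u} {X : Type v} {𝒢 : Gpd G} (α : GpdSetAction 𝒢 X)

lemma car_inv (g : G) : α.car (𝒢.inv g) = α.car (𝒢.s g) := by
  rw [α.car_t (𝒢.inv g), 𝒢.t_inv]

lemma car_inv_inv (g : G) : α.car (𝒢.inv (𝒢.inv g)) = α.car (𝒢.t g) := by
  rw [α.car_inv, 𝒢.s_inv]

lemma mapsTo (g : G) {x : X} (hx : x ∈ α.car (𝒢.s g)) : α.act g x ∈ α.car (𝒢.t g) := by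
  rw [← α.car_t]
  exact (α.bijOn g).mapsTo (by rwa [α.car_inv])

lemma inv_mapsTo (g : G) {x : X} (hx : x ∈ α.car (𝒢.t g)) :
    α.act (𝒢.inv g) x ∈ α.car (𝒢.s g) := by
  rw [← 𝒢.t_inv]
  exact α.mapsTo _ (by rwa [𝒢.s_inv])

lemma act_inv_act (g : G) {x : X} (hx : x ∈ α.car (𝒢.s g)) :
    α.act (𝒢.inv g) (α.act g x) = x := by
  rw [α.act_mul (𝒢.inv g) g (𝒢.s_inv g) x (by rwa [α.car_inv]), 𝒢.inv_mul]
  exact α.act_id _ (𝒢.obj_s g) x hx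

lemma act_act_inv (g : G) {y : X} (hy : y ∈ α.car (𝒢.t g)) :
    α.act g (α.act (𝒢.inv g) y) = y := by
  rw [α.act_mul g (𝒢.inv g) (𝒢.t_inv g).symm y (by rwa [α.car_inv_inv]), 𝒢.mul_inv]
  exact α.act_id _ (𝒢.obj_t g) y hy

lemma act_injOn (g : G) {x y : X} (hx : x ∈ α.car (𝒢.s g)) (hy : y ∈ α.car (𝒢.s g))
    (h : α.act g x = α.act g y) : x = y := by
  rw [← α.act_inv_act g hx, h, α.act_inv_act g hy]

lemma mem_orbit_self {g : G} {x : X} (hx : x ∈ α.car g) : x ∈ orbit α x :=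
  ⟨𝒢.t g, by rwa [α.car_inv, 𝒢.s_t, ← α.car_t],
    α.act_id _ (𝒢.obj_t g) x (by rwa [← α.car_t])⟩

end GpdSetAction

lemma GKCompat.act_mem {G : Type u} {K : Type*} {X : Type v} {𝒢 : Gpd G} {𝒦 : Gpd K}
    {α : GpdSetAction 𝒢 X} {β : GpdSetAction 𝒦 X} (hαβ : GKCompat α β) {κ : K} {g : G} {x : X}
    (hκ : x ∈ β.car (𝒦.inv κ)) (hx : x ∈ α.car g) : β.act κ x ∈ α.car g :=
  (hαβ.beta_inv g κ ⟨x, ⟨hx, hκ⟩, rfl⟩).1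

section SmashCalculus

variable {G : Type u} {K : Type*} {X : Type v} {k : Type*} {A : Type w}
  [Field k] [Ring A] [Algebra k A] {𝒢 : Gpd G} {𝒦 : Gpd K}
  {α : GpdSetAction 𝒢 X} {β : GpdSetAction 𝒦 X} {𝒜 : GpdGrading 𝒢 k A}

lemma smashMul_zero_left (f : (G × X) →₀ A) : smashMul α 0 f = 0 :=
  Finsupp.sum_zero_index

lemma smashMul_zero_right (f : (G × X) →₀ A) : smashMul α f 0 = 0 := by
  simp only [smashMul, Finsupp.sum, Finsupp.support_zero,
    Finset.sum_empty, Finset.sum_const_zero]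

lemma smashMul_single_single (p q : G × X) (a b : A) :
    smashMul α (Finsupp.single p a) (Finsupp.single q b)
      = if 𝒢.s p.1 = 𝒢.t q.1 ∧ α.act q.1 q.2 = p.2
        then Finsupp.single (𝒢.mul p.1 q.1, q.2) (a * b) else 0 := by
  unfold smashMul
  rw [Finsupp.sum_single_index (by simp), Finsupp.sum_single_index (by simp)]

lemma smashMul_single_single' (g h : G) (x y : X) (a b : A) :
    smashMul α (Finsupp.single (g, x) a) (Finsupp.single (h, y) b)
      = if 𝒢.s g = 𝒢.t h ∧ α.act h y = x
        then Finsupp.single (𝒢.mul g h, y) (a * b) else 0 :=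
  smashMul_single_single (g, x) (h, y) a b

lemma smashMul_add_left (f₁ f₂ g : (G × X) →₀ A) :
    smashMul α (f₁ + f₂) g = smashMul α f₁ g + smashMul α f₂ g := by
  unfold smashMul
  refine Finsupp.sum_add_index' (fun p => by simp) (fun p b₁ b₂ => ?_)
  rw [← Finsupp.sum_add]
  exact Finsupp.sum_congr fun q hq => by
    split_ifs with h
    · rw [add_mul, Finsupp.single_add]
    · rw [add_zero]

lemma smashMul_add_right (f g₁ g₂ : (G × X) →₀ A) :
    smashMul α f (g₁ + g₂) = smashMul α f g₁ + smashMul α f g₂ := by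
  unfold smashMul
  rw [← Finsupp.sum_add]
  exact Finsupp.sum_congr fun p hp =>
    Finsupp.sum_add_index' (fun q => by simp) (fun q b₁ b₂ => by
      split_ifs with h
      · rw [mul_add, Finsupp.single_add]
      · rw [add_zero])

lemma smashMul_smul_left (c : k) (f g : (G × X) →₀ A) :
    smashMul α (c • f) g = c • smashMul α f g := by
  unfold smashMul
  rw [Finsupp.sum_smul_index' (fun p => by simp), Finsupp.smul_sum]
  refine Finsupp.sum_congr fun p hp => ?_
  rw [Finsupp.smul_sum]
  refine Finsupp.sum_congr fun q hq => ?_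
  split_ifs with h
  · rw [smul_mul_assoc, Finsupp.smul_single]
  · rw [smul_zero]

lemma smashMul_smul_right (c : k) (f g : (G × X) →₀ A) :
    smashMul α f (c • g) = c • smashMul α f g := by
  unfold smashMul
  rw [Finsupp.smul_sum]
  refine Finsupp.sum_congr fun p hp => ?_
  rw [Finsupp.sum_smul_index' (fun q => by simp), Finsupp.smul_sum]
  refine Finsupp.sum_congr fun q hq => ?_
  split_ifs with h
  · rw [mul_smul_comm, Finsupp.smul_single]
  · rw [smul_zero]

lemma smashMul_sum_left {ι : Type*} (s : Finset ι) (t : ι → (G × X) →₀ A)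
    (g : (G × X) →₀ A) :
    smashMul α (∑ i ∈ s, t i) g = ∑ i ∈ s, smashMul α (t i) g :=
  map_sum (AddMonoidHom.mk' (smashMul α · g) fun f₁ f₂ => smashMul_add_left f₁ f₂ g) t s

lemma smashMul_sum_right {ι : Type*} (s : Finset ι) (f : (G × X) →₀ A)
    (t : ι → (G × X) →₀ A) :
    smashMul α f (∑ i ∈ s, t i) = ∑ i ∈ s, smashMul α f (t i) :=
  map_sum (AddMonoidHom.mk' (smashMul α f) (smashMul_add_right f)) t s

lemma gammaAct_zero (κ : K) : gammaAct β κ (0 : (G × X) →₀ A) = 0 :=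
  Finsupp.sum_zero_index

lemma gammaAct_single (κ : K) (g : G) (x : X) (a : A) :
    gammaAct β κ (Finsupp.single (g, x) a)
      = if x ∈ β.car (𝒦.inv κ) then Finsupp.single (g, β.act κ x) a else 0 := by
  unfold gammaAct
  rw [Finsupp.sum_single_index (by simp)]

lemma gammaAct_add (κ : K) (f g : (G × X) →₀ A) :
    gammaAct β κ (f + g) = gammaAct β κ f + gammaAct β κ g := by
  unfold gammaAct
  exact Finsupp.sum_add_index' (fun p => by simp) (fun p b₁ b₂ => by
    split_ifs with h
    · rw [Finsupp.single_add]
    · rw [add_zero])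

lemma gammaAct_smul (c : k) (κ : K) (f : (G × X) →₀ A) :
    gammaAct β κ (c • f) = c • gammaAct β κ f := by
  unfold gammaAct
  rw [Finsupp.sum_smul_index' (fun p => by simp), Finsupp.smul_sum]
  refine Finsupp.sum_congr fun p hp => ?_
  split_ifs with h
  · rw [Finsupp.smul_single]
  · rw [smul_zero]

lemma gammaAct_sum {ι : Type*} (κ : K) (s : Finset ι) (t : ι → (G × X) →₀ A) :
    gammaAct β κ (∑ i ∈ s, t i) = ∑ i ∈ s, gammaAct β κ (t i) :=
  map_sum (AddMonoidHom.mk' (M := (G × X) →₀ A) (gammaAct β κ) (gammaAct_add κ)) t s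

noncomputable def fiberFinset [Finite X] (α : GpdSetAction 𝒢 X) (β : GpdSetAction 𝒦 X)
    (p : G × OrbT β) : Finset X :=
  (Set.toFinite {y | y ∈ α.car (𝒢.s p.1) ∧ orbit β y = (p.2 : Set X)}).toFinset

lemma mem_fiberFinset [Finite X] (p : G × OrbT β) (y : X) :
    y ∈ fiberFinset α β p ↔ y ∈ α.car (𝒢.s p.1) ∧ orbit β y = (p.2 : Set X) := by
  unfold fiberFinset
  rw [Set.Finite.mem_toFinset]
  rfl

lemma phiStar_eq [Finite X] (f : (G × OrbT β) →₀ A) :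
    phiStar α β f = f.sum fun p a => ∑ y ∈ fiberFinset α β p, Finsupp.single (p.1, y) a := by
  unfold phiStar
  refine Finsupp.sum_congr fun p _ => ?_
  have hset : {y | y ∈ α.car (𝒢.s p.1) ∧ orbit β y = (p.2 : Set X)} = ↑(fiberFinset α β p) :=
    (Set.Finite.coe_toFinset _).symm
  rw [hset, finsum_mem_coe_finset]

lemma phiStar_single [Finite X] (p : G × OrbT β) (b : A) :
    phiStar α β (Finsupp.single p b)
      = ∑ y ∈ fiberFinset α β p, Finsupp.single (p.1, y) b := by
  rw [phiStar_eq, Finsupp.sum_single_index (by simp)]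

lemma phiStar_add [Finite X] (f g : (G × OrbT β) →₀ A) :
    phiStar α β (f + g) = phiStar α β f + phiStar α β g := by
  rw [phiStar_eq, phiStar_eq, phiStar_eq]
  refine Finsupp.sum_add_index' (fun p => by simp) (fun p b₁ b₂ => ?_)
  rw [← Finset.sum_add_distrib]
  exact Finset.sum_congr rfl fun y _ => by rw [Finsupp.single_add]

lemma smashSet_zero : (0 : (G × X) →₀ A) ∈ smashSet α 𝒜 := by
  intro p
  refine ⟨by simp, fun h => absurd rfl h⟩

lemma smashSet_add {f g : (G × X) →₀ A} (hf : f ∈ smashSet α 𝒜)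
    (hg : g ∈ smashSet α 𝒜) : f + g ∈ smashSet α 𝒜 := by
  intro p
  rw [Finsupp.add_apply]
  refine ⟨Submodule.add_mem _ (hf p).1 (hg p).1, fun hne => ?_⟩
  by_cases h1 : f p = 0
  · by_cases h2 : g p = 0
    · exact absurd (by rw [h1, h2, add_zero]) hne
    · exact (hg p).2 h2
  · exact (hf p).2 h1

lemma smashSet_single {p : G × X} {a : A} (ha : a ∈ 𝒜.comp p.1)
    (hx : a ≠ 0 → p.2 ∈ α.car (𝒢.s p.1)) :
    Finsupp.single p a ∈ smashSet α 𝒜 := by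
  intro q
  rw [Finsupp.single_apply]
  split_ifs with h
  · cases h
    exact ⟨ha, hx⟩
  · exact ⟨Submodule.zero_mem _, fun h0 => absurd rfl h0⟩

lemma smashSet_finset_sum {ι : Type*} (s : Finset ι) (t : ι → (G × X) →₀ A)
    (ht : ∀ i ∈ s, t i ∈ smashSet α 𝒜) : (∑ i ∈ s, t i) ∈ smashSet α 𝒜 :=
  Finset.sum_induction t (· ∈ smashSet α 𝒜) (fun _ _ => smashSet_add) smashSet_zero ht

lemma smashSet_finsupp_sum {ι : Type*} {M : Type*} [Zero M] (f : ι →₀ M)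
    (h : ι → M → (G × X) →₀ A)
    (H : ∀ i ∈ f.support, h i (f i) ∈ smashSet α 𝒜) : f.sum h ∈ smashSet α 𝒜 :=
  smashSet_finset_sum _ _ H

lemma smashSet_mul {f g : (G × X) →₀ A} (hf : f ∈ smashSet α 𝒜)
    (hg : g ∈ smashSet α 𝒜) : smashMul α f g ∈ smashSet α 𝒜 := by
  refine smashSet_finsupp_sum _ _ fun p hp => ?_
  refine smashSet_finsupp_sum _ _ fun q hq => ?_
  split_ifs with hcond
  · refine smashSet_single (𝒜.mul_mem _ _ hcond.1 _ (hf p).1 _ (hg q).1) (fun hne => ?_)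
    have hq2 : g q ≠ 0 := fun h0 => hne (by rw [h0, mul_zero])
    show q.2 ∈ α.car (𝒢.s (𝒢.mul p.1 q.1))
    rw [𝒢.s_mul _ _ hcond.1]
    exact (hg q).2 hq2
  · exact smashSet_zero

lemma smashSet_induction {P : ((G × X) →₀ A) → Prop} (h0 : P 0)
    (hadd : ∀ f g, f ∈ smashSet α 𝒜 → g ∈ smashSet α 𝒜 → P f → P g → P (f + g))
    (hsingle : ∀ p : G × X, ∀ a : A, a ∈ 𝒜.comp p.1 → p.2 ∈ α.car (𝒢.s p.1) →
      P (Finsupp.single p a)) :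
    ∀ f, f ∈ smashSet α 𝒜 → P f := by
  intro f hf
  generalize hn : f.support.card = n
  induction n generalizing f with
  | zero =>
      have : f = 0 := Finsupp.card_support_eq_zero.mp hn
      rwa [this]
  | succ n ih =>
      obtain ⟨p, hp⟩ : f.support.Nonempty := Finset.card_pos.mp (by rw [hn]; exact n.succ_pos)
      have hfp : f p ≠ 0 := Finsupp.mem_support_iff.mp hp
      have hErase : Finsupp.erase p f ∈ smashSet α 𝒜 := by
        intro q
        rw [Finsupp.erase_apply]
        split_ifs with h
        · exact ⟨Submodule.zero_mem _, fun h0 => absurd rfl h0⟩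
        · exact hf q
      have hsing_mem : Finsupp.single p (f p) ∈ smashSet α 𝒜 :=
        smashSet_single (hf p).1 (fun _ => (hf p).2 hfp)
      have hP1 : P (Finsupp.single p (f p)) := hsingle p (f p) (hf p).1 ((hf p).2 hfp)
      have hcard : (Finsupp.erase p f).support.card = n := by
        rw [Finsupp.support_erase, Finset.card_erase_of_mem hp, hn]
        rfl
      have hP2 : P (Finsupp.erase p f) := ih _ hErase hcard
      have := hadd _ _ hsing_mem hErase hP1 hP2
      rwa [Finsupp.single_add_erase] at this

lemma smashMul_single_phiStar_single [Finite X] {g : G} {x : X} (hx : x ∈ α.car (𝒢.s g))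
    (a : A) (h : G) (o : OrbT β) (b : A) :
    smashMul α (Finsupp.single (g, x) a) (phiStar α β (Finsupp.single (h, o) b))
      = if 𝒢.s g = 𝒢.t h ∧ orbit β (α.act (𝒢.inv h) x) = (o : Set X)
        then Finsupp.single (𝒢.mul g h, α.act (𝒢.inv h) x) (a * b) else 0 := by
  rw [phiStar_single, smashMul_sum_right]
  by_cases hc : 𝒢.s g = 𝒢.t h
  · have hxt : x ∈ α.car (𝒢.t h) := hc ▸ hx
    have huniq : ∀ y ∈ fiberFinset α β (h, o), α.act h y = x → y = α.act (𝒢.inv h) x :=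
      fun y hy hyx => by rw [← hyx, α.act_inv_act h ((mem_fiberFinset _ _).mp hy).1]
    by_cases ho : orbit β (α.act (𝒢.inv h) x) = (o : Set X)
    · rw [if_pos ⟨hc, ho⟩, Finset.sum_eq_single (α.act (𝒢.inv h) x)]
      · rw [smashMul_single_single, if_pos ⟨hc, α.act_act_inv h hxt⟩]
      · intro y hy hne
        rw [smashMul_single_single, if_neg fun hh => hne (huniq y hy hh.2)]
      · exact fun hnot => absurd ((mem_fiberFinset _ _).mpr ⟨α.inv_mapsTo h hxt, ho⟩) hnot
    · rw [if_neg fun hh => ho hh.2]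
      refine Finset.sum_eq_zero fun y hy => ?_
      rw [smashMul_single_single]
      refine if_neg fun hh => ho ?_
      rw [← huniq y hy hh.2]
      exact ((mem_fiberFinset _ _).mp hy).2
  · rw [if_neg fun hh => hc hh.1]
    exact Finset.sum_eq_zero fun y _ => by rw [smashMul_single_single, if_neg fun hh => hc hh.1]

noncomputable def colProj (z : X) (m : (G × X) →₀ A) : (G × X) →₀ A :=
  m.sum fun p c => if p.2 = z then Finsupp.single p c else 0

lemma colProj_mem {m : (G × X) →₀ A} (hm : m ∈ smashSet α 𝒜) (z : X) :
    colProj z m ∈ smashSet α 𝒜 := by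
  refine smashSet_finsupp_sum _ _ fun p hp => ?_
  split_ifs with h
  · exact smashSet_single (hm p).1 (hm p).2
  · exact smashSet_zero

lemma smashMul_colProj_single (z : X) (m : (G × X) →₀ A) (q : G × X) (b : A) :
    smashMul α (colProj z m) (Finsupp.single q b)
      = if α.act q.1 q.2 = z then smashMul α m (Finsupp.single q b) else 0 := by
  rw [colProj, Finsupp.sum, smashMul_sum_left]
  by_cases hz : α.act q.1 q.2 = z
  · rw [if_pos hz]
    conv_rhs => rw [← Finsupp.sum_single m]
    rw [show (m.sum Finsupp.single) = ∑ p ∈ m.support, Finsupp.single p (m p) from rfl,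
      smashMul_sum_left]
    refine Finset.sum_congr rfl fun p hp => ?_
    rw [apply_ite (fun u => smashMul α u (Finsupp.single q b)), smashMul_zero_left]
    split_ifs with h1
    · rfl
    · rw [smashMul_single_single]
      refine (if_neg (fun hh => h1 ?_)).symm
      rw [← hh.2, hz]
  · rw [if_neg hz]
    refine Finset.sum_eq_zero fun p hp => ?_
    rw [apply_ite (fun u => smashMul α u (Finsupp.single q b)), smashMul_zero_left,
      smashMul_single_single]
    split_ifs with h1 h2
    · exact absurd (h2.2.trans h1) hz
    · rfl
    · rfl

def smashUnit (𝒜 : GpdGrading 𝒢 k A) (e : G) (x : X) : (G × X) →₀ A :=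
  Finsupp.single (e, x) (𝒜.proj e 1)

lemma smashUnit_mem {e : G} (he : 𝒢.obj e) {x : X} (hx : x ∈ α.car e) :
    smashUnit 𝒜 e x ∈ smashSet α 𝒜 :=
  smashSet_single (𝒜.proj_mem _ 1) fun _ => by show x ∈ α.car (𝒢.s e); rwa [he]

lemma smashMul_single_smashUnit_apply {e : G} (he : 𝒢.obj e) {y : X} (hy : y ∈ α.car e)
    {h : G} {x : X} {a : A} (ha : a ∈ 𝒜.comp h) (g : G) (z : X) :
    smashMul α (Finsupp.single (h, x) a) (smashUnit 𝒜 e y) (g, z)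
      = if 𝒢.s g = e ∧ z = y then Finsupp.single (h, x) a (g, z) else 0 := by
  unfold smashUnit
  rw [smashMul_single_single]
  simp only [𝒢.t_obj he, α.act_id e he y hy]
  by_cases hc : 𝒢.s h = e ∧ y = x
  · obtain ⟨rfl, rfl⟩ := hc
    rw [if_pos ⟨rfl, rfl⟩, 𝒢.mul_src, 𝒜.mul_proj_one ha]
    by_cases hgz : (h, y) = (g, z)
    · obtain ⟨rfl, rfl⟩ := Prod.mk.inj hgz
      rw [if_pos ⟨rfl, rfl⟩]
    · rw [Finsupp.single_eq_of_ne' hgz, ite_self]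
  · rw [if_neg hc, Finsupp.zero_apply, Finsupp.single_apply]
    split_ifs with h₁ h₂ <;> try rfl
    obtain ⟨rfl, rfl⟩ := Prod.mk.inj h₂
    exact absurd ⟨h₁.1, h₁.2.symm⟩ hc

lemma smashMul_smashUnit_apply {e : G} (he : 𝒢.obj e) {y : X} (hy : y ∈ α.car e)
    {m : (G × X) →₀ A} (hm : m ∈ smashSet α 𝒜) (g : G) (z : X) :
    smashMul α m (smashUnit 𝒜 e y) (g, z) = if 𝒢.s g = e ∧ z = y then m (g, z) else 0 := by
  refine smashSet_induction (P := fun m => smashMul α m (smashUnit 𝒜 e y) (g, z)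
    = if 𝒢.s g = e ∧ z = y then m (g, z) else 0) ?_ ?_ ?_ m hm
  · rw [smashMul_zero_left, Finsupp.zero_apply, ite_self]
  · intro u v _ _ hu hv
    rw [smashMul_add_left, Finsupp.add_apply, hu, hv, Finsupp.add_apply, ite_add_ite, add_zero]
  · rintro ⟨h, x⟩ a ha -
    exact smashMul_single_smashUnit_apply he hy ha g z

lemma smashUnit_mul_phiStar_single [Finite X] {g : G} {x : X} (hx : x ∈ α.car (𝒢.s g))
    {a : A} (ha : a ∈ 𝒜.comp g) :
    smashMul α (smashUnit 𝒜 (𝒢.t g) (α.act g x))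
      (phiStar α β (Finsupp.single (g, orbMap β x) a)) = Finsupp.single (g, x) a := by
  unfold smashUnit
  rw [smashMul_single_phiStar_single (by rw [𝒢.s_t]; exact α.mapsTo g hx), 𝒢.s_t,
    α.act_inv_act g hx, if_pos ⟨rfl, rfl⟩, 𝒢.tgt_mul, 𝒜.proj_one_mul ha]

lemma smashMul_single_assoc (p q r : G × X) (a b c : A) (hr : r.2 ∈ α.car (𝒢.s r.1)) :
    smashMul α (smashMul α (Finsupp.single p a) (Finsupp.single q b)) (Finsupp.single r c)
      = smashMul α (Finsupp.single p a) (smashMul α (Finsupp.single q b) (Finsupp.single r c)) := by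
  have hrcar : r.2 ∈ α.car (𝒢.inv r.1) := by rwa [α.car_inv]
  rw [smashMul_single_single (α := α) p q a b]
  by_cases hP : 𝒢.s p.1 = 𝒢.t q.1 ∧ α.act q.1 q.2 = p.2
  · rw [if_pos hP, smashMul_single_single, smashMul_single_single]
    by_cases hQ : 𝒢.s q.1 = 𝒢.t r.1 ∧ α.act r.1 r.2 = q.2
    · rw [if_pos ⟨by rw [𝒢.s_mul p.1 q.1 hP.1]; exact hQ.1, hQ.2⟩, if_pos hQ,
        smashMul_single_single]
      have hcond2 : 𝒢.s p.1 = 𝒢.t (𝒢.mul q.1 r.1) ∧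
          α.act (𝒢.mul q.1 r.1) r.2 = p.2 := by
        constructor
        · rw [𝒢.t_mul q.1 r.1 hQ.1]; exact hP.1
        · rw [← α.act_mul q.1 r.1 hQ.1 r.2 hrcar, hQ.2, hP.2]
      rw [if_pos hcond2]
      have hpt : (𝒢.mul (𝒢.mul p.1 q.1) r.1, r.2)
          = (𝒢.mul p.1 (𝒢.mul q.1 r.1), r.2) := by
        rw [𝒢.mul_assoc p.1 q.1 r.1 hP.1 hQ.1]
      rw [hpt, mul_assoc]
    · rw [if_neg hQ, smashMul_zero_right]
      refine if_neg (fun hh => hQ ⟨?_, hh.2⟩)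
      rw [← 𝒢.s_mul p.1 q.1 hP.1]
      exact hh.1
  · rw [if_neg hP, smashMul_zero_left, smashMul_single_single]
    by_cases hQ : 𝒢.s q.1 = 𝒢.t r.1 ∧ α.act r.1 r.2 = q.2
    · rw [if_pos hQ, smashMul_single_single]
      refine (if_neg (fun hh => hP ⟨?_, ?_⟩)).symm
      · rw [hh.1, 𝒢.t_mul q.1 r.1 hQ.1]
      · rw [← hQ.2, α.act_mul q.1 r.1 hQ.1 r.2 hrcar, hh.2]
    · rw [if_neg hQ, smashMul_zero_right]

lemma smashMul_assoc {m₃ : (G × X) →₀ A} (h₃ : m₃ ∈ smashSet α 𝒜) (m₁ m₂ : (G × X) →₀ A) :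
    smashMul α (smashMul α m₁ m₂) m₃ = smashMul α m₁ (smashMul α m₂ m₃) := by
  revert m₁ m₂
  refine smashSet_induction (P := fun f => ∀ m₁ m₂ : (G × X) →₀ A,
    smashMul α (smashMul α m₁ m₂) f = smashMul α m₁ (smashMul α m₂ f)) ?_ ?_ ?_ m₃ h₃
  · intro m₁ m₂
    rw [smashMul_zero_right, smashMul_zero_right, smashMul_zero_right]
  · intro f g _ _ Pf Pg m₁ m₂
    rw [smashMul_add_right, smashMul_add_right, Pf, Pg, smashMul_add_right]
  · intro r c _ hr m₁ m₂
    induction m₁ using Finsupp.induction_linear with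
    | zero => rw [smashMul_zero_left, smashMul_zero_left, smashMul_zero_left]
    | add u v hu hv => rw [smashMul_add_left, smashMul_add_left, hu, hv, smashMul_add_left]
    | single p a =>
        induction m₂ using Finsupp.induction_linear with
        | zero => rw [smashMul_zero_right, smashMul_zero_left, smashMul_zero_right]
        | add u v hu hv =>
            rw [smashMul_add_right, smashMul_add_left, hu, hv, smashMul_add_left,
              smashMul_add_right]
        | single q b => exact smashMul_single_assoc p q r a b c hr

lemma gammaAct_eq_zero {κ : K} (h : β.car (𝒦.inv κ) = ∅) (f : (G × X) →₀ A) :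
    gammaAct β κ f = 0 :=
  Finset.sum_eq_zero fun p _ => if_neg fun hmem => by rwa [h] at hmem

lemma gammaAct_mem (hαβ : GKCompat α β) (κ : K) {f : (G × X) →₀ A} (hf : f ∈ smashSet α 𝒜) :
    gammaAct β κ f ∈ smashSet α 𝒜 := by
  refine smashSet_finsupp_sum _ _ fun p _ => ?_
  split_ifs with h
  · exact smashSet_single (hf p).1 fun hne => hαβ.act_mem h ((hf p).2 hne)
  · exact smashSet_zero

lemma phiStar_zero : phiStar α β (0 : (G × OrbT β) →₀ A) = 0 :=
  Finsupp.sum_zero_index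

lemma phiStar_mem [Finite X] {lam : GpdSetAction 𝒢 (OrbT β)} {w : (G × OrbT β) →₀ A}
    (hw : w ∈ smashSet lam 𝒜) : phiStar α β w ∈ smashSet α 𝒜 := by
  rw [phiStar_eq]
  refine smashSet_finsupp_sum _ _ fun p _ => smashSet_finset_sum _ _ fun y hy => ?_
  exact smashSet_single (hw p).1 (fun _ => ((mem_fiberFinset p y).mp hy).1)

end SmashCalculus

structure GpdSetAction.FreeGroupLike {K : Type*} {𝒦 : Gpd K} {X : Type v}
    (β : GpdSetAction 𝒦 X) : Prop where
  car_eq : ∀ κ, β.car κ = Set.univ ∨ β.car κ = ∅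
  covers : ∀ x, ∃ κ, x ∈ β.car κ
  s_eq_t : ∀ κ l, β.car κ = Set.univ → β.car l = Set.univ → 𝒦.s κ = 𝒦.t l
  fullyFaithful : β.FullyFaithful

namespace GpdSetAction.FreeGroupLike

variable {K : Type*} {𝒦 : Gpd K} {X : Type v} {β : GpdSetAction 𝒦 X}

lemma car_inv_eq (hβ : β.FreeGroupLike) (κ : K) : β.car (𝒦.inv κ) = β.car κ := by
  have hb := β.bijOn κ
  rcases hβ.car_eq κ with h | h <;> rcases hβ.car_eq (𝒦.inv κ) with h' | h' <;>
    rw [h, h'] at hb ⊢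
  · exact (Set.bijOn_empty_iff_right.mp hb).symm
  · exact Set.bijOn_empty_iff_left.mp hb

lemma mem_car_inv (hβ : β.FreeGroupLike) {κ : K} (hκ : β.car κ = Set.univ) (x : X) :
    x ∈ β.car (𝒦.inv κ) := by
  rw [hβ.car_inv_eq, hκ]
  trivial

lemma mem_car_s (hβ : β.FreeGroupLike) {κ : K} (hκ : β.car κ = Set.univ) (x : X) :
    x ∈ β.car (𝒦.s κ) :=
  β.car_inv κ ▸ hβ.mem_car_inv hκ x

lemma mul_car (hβ : β.FreeGroupLike) {κ l : K} (hκ : β.car κ = Set.univ)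
    (hl : β.car l = Set.univ) : β.car (𝒦.mul κ l) = Set.univ := by
  rw [β.car_t, 𝒦.t_mul _ _ (hβ.s_eq_t κ l hκ hl), ← β.car_t, hκ]

lemma act_mul (hβ : β.FreeGroupLike) {κ l : K} (hκ : β.car κ = Set.univ)
    (hl : β.car l = Set.univ) (x : X) : β.act (𝒦.mul κ l) x = β.act κ (β.act l x) :=
  (β.act_mul κ l (hβ.s_eq_t κ l hκ hl) x (hβ.mem_car_inv hl x)).symm

lemma eq_of_act_eq (hβ : β.FreeGroupLike) {κ l : K} (hκ : β.car κ = Set.univ)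
    (hl : β.car l = Set.univ) {x : X} (h : β.act κ x = β.act l x) : κ = l := by
  have hl' : β.car (𝒦.inv l) = Set.univ := by rw [hβ.car_inv_eq, hl]
  refine 𝒦.eq_of_obj_inv_mul ((hβ.s_eq_t κ l hκ hl).symm.trans (hβ.s_eq_t κ κ hκ hκ))
    (hβ.fullyFaithful _ x ?_ ?_)
  · rw [hβ.car_inv_eq, hβ.mul_car hl' hκ]
    exact ⟨trivial, trivial⟩
  · rw [hβ.act_mul hl' hκ, h, β.act_inv_act l (hβ.mem_car_s hl x)]

lemma act_injective (hβ : β.FreeGroupLike) {κ : K} (hκ : β.car κ = Set.univ) :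
    Function.Injective (β.act κ) := fun x y h =>
  β.act_injOn κ (hβ.mem_car_s hκ x) (hβ.mem_car_s hκ y) h

lemma mem_orbit_iff (hβ : β.FreeGroupLike) {x y : X} :
    y ∈ orbit β x ↔ ∃ κ, β.car κ = Set.univ ∧ β.act κ x = y := by
  constructor
  · rintro ⟨κ, hx, hy⟩
    rcases hβ.car_eq κ with h | h
    · exact ⟨κ, h, hy⟩
    · rw [hβ.car_inv_eq, h] at hx
      exact hx.elim
  · rintro ⟨κ, hκ, hy⟩
    exact ⟨κ, hβ.mem_car_inv hκ x, hy⟩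

lemma mem_orbit_self (hβ : β.FreeGroupLike) (x : X) : x ∈ orbit β x :=
  (hβ.covers x).elim fun _ hx => β.mem_orbit_self hx

lemma orbit_act (hβ : β.FreeGroupLike) {κ : K} (hκ : β.car κ = Set.univ) (x : X) :
    orbit β (β.act κ x) = orbit β x := by
  have hκ' : β.car (𝒦.inv κ) = Set.univ := by rw [hβ.car_inv_eq, hκ]
  ext y
  rw [hβ.mem_orbit_iff, hβ.mem_orbit_iff]
  constructor
  · rintro ⟨l, hl, rfl⟩
    exact ⟨𝒦.mul l κ, hβ.mul_car hl hκ, hβ.act_mul hl hκ x⟩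
  · rintro ⟨l, hl, rfl⟩
    refine ⟨𝒦.mul l (𝒦.inv κ), hβ.mul_car hl hκ', ?_⟩
    rw [hβ.act_mul hl hκ', β.act_inv_act κ (hβ.mem_car_s hκ x)]

end GpdSetAction.FreeGroupLike

section Duality

variable {G : Type u} {K : Type*} {X : Type v} {k : Type*} {A : Type w}
  [Field k] [Ring A] [Algebra k A] {𝒢 : Gpd G} {𝒦 : Gpd K}
  {α : GpdSetAction 𝒢 X} {β : GpdSetAction 𝒦 X} {𝒜 : GpdGrading 𝒢 k A}

lemma gammaAct_smashMul_phiStar [Finite X] (hαβ : GKCompat α β) {κ : K}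
    (hκ : β.car (𝒦.inv κ) = Set.univ) (horb : ∀ x, orbit β (β.act κ x) = orbit β x)
    {f : (G × X) →₀ A} (hf : f ∈ smashSet α 𝒜) (w : (G × OrbT β) →₀ A) :
    gammaAct β κ (smashMul α f (phiStar α β w))
      = smashMul α (gammaAct β κ f) (phiStar α β w) := by
  have hmem : ∀ u : X, u ∈ β.car (𝒦.inv κ) := fun u => hκ ▸ Set.mem_univ u
  revert w
  refine smashSet_induction (P := fun f => ∀ w : (G × OrbT β) →₀ A,
    gammaAct β κ (smashMul α f (phiStar α β w))
      = smashMul α (gammaAct β κ f) (phiStar α β w)) ?_ ?_ ?_ f hf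
  · intro w
    rw [smashMul_zero_left, gammaAct_zero, smashMul_zero_left]
  · intro u v _ _ hu hv w
    rw [smashMul_add_left, gammaAct_add, hu, hv, gammaAct_add, smashMul_add_left]
  · rintro ⟨g, x⟩ a - hx w
    induction w using Finsupp.induction_linear with
    | zero => rw [phiStar_zero, smashMul_zero_right, gammaAct_zero, smashMul_zero_right]
    | add u v hu hv =>
        rw [phiStar_add, smashMul_add_right, gammaAct_add, hu, hv, smashMul_add_right]
    | single p b =>
        obtain ⟨h, o⟩ := p
        rw [smashMul_single_phiStar_single hx, gammaAct_single, if_pos (hmem x),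
          smashMul_single_phiStar_single (hαβ.act_mem (hmem x) hx), apply_ite (gammaAct β κ),
          gammaAct_zero, gammaAct_single, if_pos (hmem _)]
        by_cases hc : 𝒢.s g = 𝒢.t h
        · have hx' : x ∈ α.car (𝒢.inv (𝒢.inv h)) := by rw [α.car_inv_inv]; exact hc ▸ hx
          rw [hαβ.comm _ _ _ ⟨hx', hmem x⟩, horb]
        · rw [if_neg (fun hh => hc hh.1), if_neg (fun hh => hc hh.1)]

lemma gammaAct_smashMul_gammaAct (hβ : β.FreeGroupLike) (hαβ : GKCompat α β) {κ l : K}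
    (hκ : β.car κ = Set.univ) (hl : β.car l = Set.univ)
    {f : (G × X) →₀ A} (hf : f ∈ smashSet α 𝒜) (m : (G × X) →₀ A) :
    gammaAct β κ (smashMul α m (gammaAct β l f))
      = smashMul α (gammaAct β κ m) (gammaAct β (𝒦.mul κ l) f) := by
  have hκl := hβ.mul_car hκ hl
  revert m
  refine smashSet_induction (P := fun f => ∀ m : (G × X) →₀ A,
    gammaAct β κ (smashMul α m (gammaAct β l f))
      = smashMul α (gammaAct β κ m) (gammaAct β (𝒦.mul κ l) f)) ?_ ?_ ?_ f hf
  · intro m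
    rw [gammaAct_zero, smashMul_zero_right, gammaAct_zero, gammaAct_zero, smashMul_zero_right]
  · intro u v _ _ hu hv m
    rw [gammaAct_add, smashMul_add_right, gammaAct_add, hu, hv, gammaAct_add,
      smashMul_add_right]
  · rintro ⟨h, y⟩ c - hy m
    have hly : β.act l y ∈ α.car (𝒢.inv h) := by
      rw [α.car_inv]
      exact hαβ.act_mem (hβ.mem_car_inv hl y) hy
    have hcomm := hαβ.comm h κ _ ⟨hly, hβ.mem_car_inv hκ _⟩
    induction m using Finsupp.induction_linear with
    | zero => rw [smashMul_zero_left, gammaAct_zero, smashMul_zero_left]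
    | add u v hu hv =>
        rw [smashMul_add_left, gammaAct_add, hu, hv, gammaAct_add, smashMul_add_left]
    | single p a =>
        obtain ⟨g, x⟩ := p
        rw [gammaAct_single, if_pos (hβ.mem_car_inv hl y), smashMul_single_single',
          apply_ite (gammaAct β κ), gammaAct_zero, gammaAct_single,
          if_pos (hβ.mem_car_inv hκ _), gammaAct_single, if_pos (hβ.mem_car_inv hκ x),
          gammaAct_single, if_pos (hβ.mem_car_inv hκl y), smashMul_single_single',
          hβ.act_mul hκ hl]
        by_cases hC : 𝒢.s g = 𝒢.t h ∧ α.act h (β.act l y) = x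
        · rw [if_pos hC, if_pos ⟨hC.1, hcomm.trans (congrArg (β.act κ) hC.2)⟩]
        · refine (if_neg hC).trans (if_neg fun hh => hC ⟨hh.1, ?_⟩).symm
          exact hβ.act_injective hκ (hcomm.symm.trans hh.2)

def skewAct (α : GpdSetAction 𝒢 X) (β : GpdSetAction 𝒦 X) (F : K →₀ ((G × X) →₀ A))
    (f : (G × X) →₀ A) : (G × X) →₀ A :=
  F.sum fun κ m => smashMul α m (gammaAct β κ f)

lemma skewAct_zero (f : (G × X) →₀ A) : skewAct α β 0 f = 0 :=
  Finsupp.sum_zero_index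

lemma skewAct_single (κ : K) (m f : (G × X) →₀ A) :
    skewAct α β (Finsupp.single κ m) f = smashMul α m (gammaAct β κ f) :=
  Finsupp.sum_single_index (smashMul_zero_left _)

lemma skewAct_add (F₁ F₂ : K →₀ ((G × X) →₀ A)) (f : (G × X) →₀ A) :
    skewAct α β (F₁ + F₂) f = skewAct α β F₁ f + skewAct α β F₂ f :=
  Finsupp.sum_add_index' (fun _ => smashMul_zero_left _) (fun _ x y => smashMul_add_left x y _)

lemma skewAct_smul (c : k) (F : K →₀ ((G × X) →₀ A)) (f : (G × X) →₀ A) :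
    skewAct α β (c • F) f = c • skewAct α β F f := by
  unfold skewAct
  rw [Finsupp.sum_smul_index' (fun κ => smashMul_zero_left (gammaAct β κ f)), Finsupp.smul_sum]
  exact Finsupp.sum_congr fun _ _ => smashMul_smul_left c _ _

lemma skewAct_finsupp_sum {ι M : Type*} [Zero M] (t : ι →₀ M)
    (h : ι → M → (K →₀ ((G × X) →₀ A))) (f : (G × X) →₀ A) :
    skewAct α β (t.sum h) f = t.sum fun i c => skewAct α β (h i c) f :=
  map_sum (AddMonoidHom.mk' (skewAct α β · f) fun F₁ F₂ => skewAct_add F₁ F₂ f) _ t.support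

lemma skewAct_apply_zero (F : K →₀ ((G × X) →₀ A)) : skewAct α β F 0 = 0 :=
  Finset.sum_eq_zero fun κ _ => by
    show smashMul α (F κ) (gammaAct β κ 0) = 0
    rw [gammaAct_zero, smashMul_zero_right]

lemma skewAct_apply_add (F : K →₀ ((G × X) →₀ A)) (f₁ f₂ : (G × X) →₀ A) :
    skewAct α β F (f₁ + f₂) = skewAct α β F f₁ + skewAct α β F f₂ := by
  unfold skewAct
  rw [← Finsupp.sum_add]
  exact Finsupp.sum_congr fun κ _ => by rw [gammaAct_add, smashMul_add_right]

lemma skewAct_apply_smul (c : k) (F : K →₀ ((G × X) →₀ A)) (f : (G × X) →₀ A) :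
    skewAct α β F (c • f) = c • skewAct α β F f := by
  unfold skewAct
  rw [Finsupp.smul_sum]
  exact Finsupp.sum_congr fun κ _ => by rw [gammaAct_smul, smashMul_smul_right]

lemma eq_zero_of_mem_Eset {κ : K} {m : (G × X) →₀ A} (hm : m ∈ Eset α β 𝒜 κ)
    (h : β.car κ = ∅) : m = 0 :=
  Finsupp.ext fun p => by_contra fun h0 => by simpa [h] using hm.2 p h0

lemma skewAct_mem (hαβ : GKCompat α β) {F : K →₀ ((G × X) →₀ A)} (hF : F ∈ skewSet α β 𝒜)
    {f : (G × X) →₀ A} (hf : f ∈ smashSet α 𝒜) : skewAct α β F f ∈ smashSet α 𝒜 :=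
  smashSet_finsupp_sum _ _ fun κ _ => smashSet_mul (hF κ).1 (gammaAct_mem hαβ κ hf)

lemma skewAct_smashMul_phiStar [Finite X] (hβ : β.FreeGroupLike) (hαβ : GKCompat α β)
    (F : K →₀ ((G × X) →₀ A)) {f : (G × X) →₀ A} (hf : f ∈ smashSet α 𝒜)
    {lam : GpdSetAction 𝒢 (OrbT β)} {w : (G × OrbT β) →₀ A} (hw : w ∈ smashSet lam 𝒜) :
    skewAct α β F (smashMul α f (phiStar α β w))
      = smashMul α (skewAct α β F f) (phiStar α β w) := by
  unfold skewAct
  rw [Finsupp.sum, Finsupp.sum, smashMul_sum_left]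
  refine Finset.sum_congr rfl fun κ _ => ?_
  rcases hβ.car_eq κ with h | h
  · rw [gammaAct_smashMul_phiStar hαβ (by rw [hβ.car_inv_eq, h]) (hβ.orbit_act h) hf w]
    exact (smashMul_assoc (phiStar_mem hw) _ _).symm
  · have h' : β.car (𝒦.inv κ) = ∅ := by rw [hβ.car_inv_eq, h]
    rw [gammaAct_eq_zero h', gammaAct_eq_zero h', smashMul_zero_right, smashMul_zero_left]

lemma isRModEnd_skewAct [Finite X] (hβ : β.FreeGroupLike) (hαβ : GKCompat α β)
    (lam : GpdSetAction 𝒢 (OrbT β)) {F : K →₀ ((G × X) →₀ A)} (hF : F ∈ skewSet α β 𝒜) :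
    IsRModEnd α β 𝒜 lam (skewAct α β F) :=
  ⟨fun _ hf => skewAct_mem hαβ hF hf, fun f₁ _ f₂ _ => skewAct_apply_add F f₁ f₂,
    fun c f _ => skewAct_apply_smul c F f, fun _ hf _ hw => skewAct_smashMul_phiStar hβ hαβ F hf hw⟩

lemma skewAct_skewMul_term (hβ : β.FreeGroupLike) (hαβ : GKCompat α β) {κ l : K}
    {m₁ m₂ f : (G × X) →₀ A} (hm₁ : m₁ ∈ Eset α β 𝒜 κ) (hm₂ : m₂ ∈ Eset α β 𝒜 l)
    (hf : f ∈ smashSet α 𝒜) :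
    skewAct α β (if 𝒦.s κ = 𝒦.t l
        then Finsupp.single (𝒦.mul κ l) (smashMul α m₁ (gammaAct β κ m₂)) else 0) f
      = smashMul α m₁ (gammaAct β κ (smashMul α m₂ (gammaAct β l f))) := by
  rcases hβ.car_eq κ with hκ | hκ
  · rcases hβ.car_eq l with hl | hl
    · rw [if_pos (hβ.s_eq_t κ l hκ hl), skewAct_single,
        gammaAct_smashMul_gammaAct hβ hαβ hκ hl hf]
      exact smashMul_assoc (gammaAct_mem hαβ _ hf) _ _
    · rw [eq_zero_of_mem_Eset hm₂ hl, gammaAct_zero, smashMul_zero_right, Finsupp.single_zero,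
        ite_self, skewAct_zero, smashMul_zero_left, gammaAct_zero, smashMul_zero_right]
  · rw [eq_zero_of_mem_Eset hm₁ hκ, smashMul_zero_left, Finsupp.single_zero, ite_self,
      skewAct_zero, smashMul_zero_left]

lemma skewAct_skewMul (hβ : β.FreeGroupLike) (hαβ : GKCompat α β)
    {F₁ F₂ : K →₀ ((G × X) →₀ A)} (hF₁ : F₁ ∈ skewSet α β 𝒜) (hF₂ : F₂ ∈ skewSet α β 𝒜)
    {f : (G × X) →₀ A} (hf : f ∈ smashSet α 𝒜) :
    skewAct α β (skewMul α β F₁ F₂) f = skewAct α β F₁ (skewAct α β F₂ f) := by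
  unfold skewMul
  rw [skewAct_finsupp_sum]
  refine Finsupp.sum_congr fun κ _ => ?_
  rw [skewAct_finsupp_sum, skewAct, Finsupp.sum, Finsupp.sum, gammaAct_sum, smashMul_sum_right]
  exact Finset.sum_congr rfl fun l _ => skewAct_skewMul_term hβ hαβ (hF₁ κ) (hF₂ l) hf

lemma gammaAct_smashUnit {κ : K} {y : X} (hy : y ∈ β.car (𝒦.inv κ)) (e : G) :
    gammaAct β κ (smashUnit 𝒜 e y) = smashUnit 𝒜 e (β.act κ y) := by
  unfold smashUnit
  rw [gammaAct_single, if_pos hy]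

/-- By freeness, `γ_ν(1_{d(g)} δ_y)` lies in the column `κ y` only for `ν = κ`. -/
lemma skewAct_smashUnit_apply (hβ : β.FreeGroupLike) (hαβ : GKCompat α β)
    {F : K →₀ ((G × X) →₀ A)} (hF : F ∈ skewSet α β 𝒜) {κ : K} (hκ : β.car κ = Set.univ)
    {g : G} {y : X} (hy : y ∈ α.car (𝒢.s g)) :
    skewAct α β F (smashUnit 𝒜 (𝒢.s g) y) (g, β.act κ y) = F κ (g, β.act κ y) := by
  have hterm : ∀ ν, smashMul α (F ν) (gammaAct β ν (smashUnit 𝒜 (𝒢.s g) y)) (g, β.act κ y)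
      = if ν = κ then F κ (g, β.act κ y) else 0 := by
    intro ν
    rcases hβ.car_eq ν with hν | hν
    · rw [gammaAct_smashUnit (hβ.mem_car_inv hν y), smashMul_smashUnit_apply (𝒢.obj_s g)
        (hαβ.act_mem (hβ.mem_car_inv hν y) hy) (hF ν).1]
      by_cases h : ν = κ
      · subst h
        rw [if_pos ⟨rfl, rfl⟩, if_pos rfl]
      · rw [if_neg fun hc => h (hβ.eq_of_act_eq hν hκ hc.2.symm), if_neg h]
    · have hνκ : ν ≠ κ := by
        rintro rfl
        have := hβ.mem_car_inv hκ y
        rwa [hβ.car_inv_eq, hν] at this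
      rw [eq_zero_of_mem_Eset (hF ν) hν, smashMul_zero_left, Finsupp.zero_apply, if_neg hνκ]
  rw [skewAct, Finsupp.sum_apply, Finsupp.sum, Finset.sum_congr rfl fun ν _ => hterm ν,
    Finset.sum_ite_eq']
  split_ifs with h
  · rfl
  · rw [Finsupp.notMem_support_iff.mp h, Finsupp.zero_apply]

lemma skewAct_injective (hβ : β.FreeGroupLike) (hαβ : GKCompat α β)
    {F₁ F₂ : K →₀ ((G × X) →₀ A)} (hF₁ : F₁ ∈ skewSet α β 𝒜) (hF₂ : F₂ ∈ skewSet α β 𝒜)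
    (h : ∀ f ∈ smashSet α 𝒜, skewAct α β F₁ f = skewAct α β F₂ f) : F₁ = F₂ := by
  ext κ ⟨g, z⟩
  rcases hβ.car_eq κ with hκ | hκ
  · by_cases hz : z ∈ α.car (𝒢.s g)
    · have hy := hαβ.act_mem (hβ.mem_car_inv (κ := 𝒦.inv κ) (by rw [hβ.car_inv_eq, hκ]) z) hz
      have hκy : β.act κ (β.act (𝒦.inv κ) z) = z :=
        β.act_act_inv κ (by rw [← β.car_t, hκ]; trivial)
      rw [← hκy, ← skewAct_smashUnit_apply hβ hαβ hF₁ hκ hy,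
        ← skewAct_smashUnit_apply hβ hαβ hF₂ hκ hy, h _ (smashUnit_mem (𝒢.obj_s g) hy)]
    · have hzero : ∀ F ∈ skewSet α β 𝒜, F κ (g, z) = 0 :=
        fun F hF => by_contra fun h0 => hz (((hF κ).1 (g, z)).2 h0)
      rw [hzero F₁ hF₁, hzero F₂ hF₂]
  · rw [eq_zero_of_mem_Eset (hF₁ κ) hκ, eq_zero_of_mem_Eset (hF₂ κ) hκ]

noncomputable def GpdSetAction.Split.objOf (hsplit : α.Split) (x : X) : G :=
  (hsplit x).exists.choose

lemma GpdSetAction.Split.objOf_eq (hsplit : α.Split) {e : G} {x : X} (he : 𝒢.obj e)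
    (hx : x ∈ α.car e) : hsplit.objOf x = e :=
  (hsplit x).unique (hsplit x).exists.choose_spec ⟨he, hx⟩

lemma GpdSetAction.Split.smashUnit_objOf_mem (hsplit : α.Split) (x : X) :
    smashUnit 𝒜 (hsplit.objOf x) x ∈ smashSet α 𝒜 :=
  smashUnit_mem (hsplit x).exists.choose_spec.1 (hsplit x).exists.choose_spec.2

def skewOfEnd [Fintype X] [Finite K] (β : GpdSetAction 𝒦 X) (𝒜 : GpdGrading 𝒢 k A)
    (e : X → G) (Φ : ((G × X) →₀ A) → ((G × X) →₀ A)) : K →₀ ((G × X) →₀ A) :=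
  Finsupp.equivFunOnFinite.symm fun κ =>
    if β.car κ = Set.univ then ∑ x, colProj (β.act κ x) (Φ (smashUnit 𝒜 (e x) x)) else 0

lemma skewOfEnd_apply [Fintype X] [Finite K] (e : X → G)
    (Φ : ((G × X) →₀ A) → ((G × X) →₀ A)) (κ : K) :
    skewOfEnd β 𝒜 e Φ κ
      = if β.car κ = Set.univ then ∑ x, colProj (β.act κ x) (Φ (smashUnit 𝒜 (e x) x)) else 0 :=
  rfl

lemma skewOfEnd_mem [Fintype X] [Finite K] {e : X → G} {Φ : ((G × X) →₀ A) → ((G × X) →₀ A)}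
    (hΦ : ∀ x, Φ (smashUnit 𝒜 (e x) x) ∈ smashSet α 𝒜) : skewOfEnd β 𝒜 e Φ ∈ skewSet α β 𝒜 := by
  intro κ
  rw [skewOfEnd_apply]
  split_ifs with hκ
  · exact ⟨smashSet_finset_sum _ _ fun x _ => colProj_mem (hΦ x) _, fun p _ => hκ ▸ trivial⟩
  · exact ⟨smashSet_zero, fun p hp => (hp rfl).elim⟩

lemma sum_colProj_smashMul_single [Fintype X] (hβ : β.FreeGroupLike) (hαβ : GKCompat α β)
    {κ : K} (hκ : β.car κ = Set.univ) (m : X → (G × X) →₀ A) {g : G} {x : X}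
    (hx : x ∈ α.car (𝒢.s g)) (a : A) :
    smashMul α (∑ x', colProj (β.act κ x') (m x')) (Finsupp.single (g, β.act κ x) a)
      = smashMul α (m (α.act g x)) (Finsupp.single (g, β.act κ x) a) := by
  have hcomm : α.act g (β.act κ x) = β.act κ (α.act g x) :=
    hαβ.comm g κ x ⟨by rwa [α.car_inv], hβ.mem_car_inv hκ x⟩
  rw [smashMul_sum_left, Finset.sum_eq_single (α.act g x)]
  · rw [smashMul_colProj_single, if_pos hcomm]
  · intro x' _ hne
    rw [smashMul_colProj_single,
      if_neg fun h => hne (hβ.act_injective hκ (hcomm.symm.trans h)).symm]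
  · exact fun h => absurd (Finset.mem_univ _) h

lemma IsRModEnd.apply_single [Finite X] {lam : GpdSetAction 𝒢 (OrbT β)}
    (hlam : ∀ g x, x ∈ α.car g → orbMap β x ∈ lam.car g)
    {Φ : ((G × X) →₀ A) → ((G × X) →₀ A)} (hΦ : IsRModEnd α β 𝒜 lam Φ)
    {g : G} {x : X} {a : A} (ha : a ∈ 𝒜.comp g) (hx : x ∈ α.car (𝒢.s g)) :
    Φ (Finsupp.single (g, x) a) = ∑ y ∈ fiberFinset α β (g, orbMap β x),
      smashMul α (Φ (smashUnit 𝒜 (𝒢.t g) (α.act g x))) (Finsupp.single (g, y) a) := by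
  rw [← smashUnit_mul_phiStar_single (β := β) hx ha,
    hΦ.2.2.2 _ (smashUnit_mem (𝒢.obj_t g) (α.mapsTo g hx)) _
      (smashSet_single ha fun _ => hlam _ x hx), phiStar_single, smashMul_sum_right]

lemma skewAct_skewOfEnd_single_eq_sum [Fintype X] [Fintype K] (hsplit : α.Split)
    (hβ : β.FreeGroupLike) (hαβ : GKCompat α β) (Φ : ((G × X) →₀ A) → ((G × X) →₀ A))
    {g : G} {x : X} (hx : x ∈ α.car (𝒢.s g)) (a : A) :
    skewAct α β (skewOfEnd β 𝒜 hsplit.objOf Φ) (Finsupp.single (g, x) a)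
      = ∑ κ ∈ Finset.univ.filter (fun κ : K => β.car κ = Set.univ),
          smashMul α (Φ (smashUnit 𝒜 (𝒢.t g) (α.act g x))) (Finsupp.single (g, β.act κ x) a) := by
  rw [skewAct, Finsupp.sum_fintype _ _ fun κ => smashMul_zero_left (gammaAct β κ _),
    Finset.sum_filter]
  refine Finset.sum_congr rfl fun κ _ => ?_
  rw [skewOfEnd_apply]
  split_ifs with hκ
  · rw [gammaAct_single, if_pos (hβ.mem_car_inv hκ x),
      sum_colProj_smashMul_single hβ hαβ hκ _ hx,
      hsplit.objOf_eq (𝒢.obj_t g) (α.mapsTo g hx)]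
  · exact smashMul_zero_left _

lemma skewAct_skewOfEnd_single [Fintype X] [Fintype K] (hsplit : α.Split)
    (hβ : β.FreeGroupLike) (hαβ : GKCompat α β) {lam : GpdSetAction 𝒢 (OrbT β)}
    (hlam : ∀ g x, x ∈ α.car g → orbMap β x ∈ lam.car g)
    {Φ : ((G × X) →₀ A) → ((G × X) →₀ A)} (hΦ : IsRModEnd α β 𝒜 lam Φ)
    {g : G} {x : X} {a : A} (ha : a ∈ 𝒜.comp g) (hx : x ∈ α.car (𝒢.s g)) :
    skewAct α β (skewOfEnd β 𝒜 hsplit.objOf Φ) (Finsupp.single (g, x) a)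
      = Φ (Finsupp.single (g, x) a) := by
  rw [skewAct_skewOfEnd_single_eq_sum hsplit hβ hαβ Φ hx, hΦ.apply_single hlam ha hx]
  -- `κ ↦ κ x` is a bijection from the group onto the points of `X_{d(g)}` in the orbit of `x`
  refine Finset.sum_nbij (fun κ => β.act κ x) (fun κ hκ => ?_) (fun κ hκ l hl h => ?_)
    (fun y hy => ?_) fun _ _ => rfl
  · have hκ : β.car κ = Set.univ := (Finset.mem_filter.mp hκ).2
    exact (mem_fiberFinset _ _).mpr ⟨hαβ.act_mem (hβ.mem_car_inv hκ x) hx, hβ.orbit_act hκ x⟩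
  · exact hβ.eq_of_act_eq (Finset.mem_filter.mp hκ).2 (Finset.mem_filter.mp hl).2 h
  · have hy' := (mem_fiberFinset _ _).mp hy
    have hyx : y ∈ orbit β x := by
      have h := hβ.mem_orbit_self y
      rwa [hy'.2] at h
    obtain ⟨κ, hκ, rfl⟩ := hβ.mem_orbit_iff.mp hyx
    exact ⟨κ, Finset.mem_filter.mpr ⟨Finset.mem_univ _, hκ⟩, rfl⟩

lemma skewAct_skewOfEnd [Fintype X] [Fintype K] (hsplit : α.Split)
    (hβ : β.FreeGroupLike) (hαβ : GKCompat α β) {lam : GpdSetAction 𝒢 (OrbT β)}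
    (hlam : ∀ g x, x ∈ α.car g → orbMap β x ∈ lam.car g)
    {Φ : ((G × X) →₀ A) → ((G × X) →₀ A)} (hΦ : IsRModEnd α β 𝒜 lam Φ)
    {f : (G × X) →₀ A} (hf : f ∈ smashSet α 𝒜) :
    skewAct α β (skewOfEnd β 𝒜 hsplit.objOf Φ) f = Φ f := by
  have hΦ0 : Φ 0 = 0 := by
    have h := hΦ.2.1 0 smashSet_zero 0 smashSet_zero
    rw [add_zero] at h
    exact left_eq_add.mp h
  refine smashSet_induction (P := fun f => skewAct α β (skewOfEnd β 𝒜 hsplit.objOf Φ) f = Φ f)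
    ?_ ?_ ?_ f hf
  · rw [hΦ0, skewAct_apply_zero]
  · intro u v hu hv Pu Pv
    rw [skewAct_apply_add, Pu, Pv, hΦ.2.1 u hu v hv]
  · rintro ⟨g, x⟩ a ha hx
    exact skewAct_skewOfEnd_single hsplit hβ hαβ hlam hΦ ha hx

theorem smashDuality_of_freeGroupLike [Finite X] [Finite K] (hsplit : α.Split)
    (hβ : β.FreeGroupLike) (hαβ : GKCompat α β) {lam : GpdSetAction 𝒢 (OrbT β)}
    (hlam : ∀ g x, x ∈ α.car g → orbMap β x ∈ lam.car g) : SmashDuality k α β 𝒜 lam := by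
  have := Fintype.ofFinite X
  have := Fintype.ofFinite K
  exact ⟨skewAct α β, fun _ hF => isRModEnd_skewAct hβ hαβ lam hF,
    fun F₁ _ F₂ _ f _ => skewAct_add F₁ F₂ f, fun c F _ f _ => skewAct_smul c F f,
    fun _ hF₁ _ hF₂ _ hf => skewAct_skewMul hβ hαβ hF₁ hF₂ hf,
    fun _ hF₁ _ hF₂ h => skewAct_injective hβ hαβ hF₁ hF₂ h,
    fun Φ hΦ => ⟨skewOfEnd β 𝒜 hsplit.objOf Φ,
      skewOfEnd_mem fun x => hΦ.1 _ (hsplit.smashUnit_objOf_mem x),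
      fun _ hf => skewAct_skewOfEnd hsplit hβ hαβ hlam hΦ hf⟩⟩

end Duality

section PartialBijections

variable {G : Type u} {𝒢 : Gpd G} {X : Type v} {α : GpdSetAction 𝒢 X}

def GpdSetAction.IsTransitive (α : GpdSetAction 𝒢 X) : Prop :=
  ∀ x y : X, ∃ g, x ∈ α.car (𝒢.inv g) ∧ α.act g x = y

lemma AlphaInvariant.eq_empty_or_univ (htrans : α.IsTransitive) {Y : Set X}
    (hY : AlphaInvariant α Y) : Y = ∅ ∨ Y = Set.univ := by
  rcases Y.eq_empty_or_nonempty with h | ⟨y, hy⟩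
  · exact Or.inl h
  · refine Or.inr (Set.eq_univ_of_forall fun z => ?_)
    obtain ⟨g, hg, rfl⟩ := htrans y z
    exact (hY g ⟨y, ⟨hy, hg⟩, rfl⟩).1

lemma IsIGElem.image_fst_eq_image_snd (htrans : α.IsTransitive) {ρ : Set (X × X)}
    (hρ : IsIGElem α ρ) : Prod.fst '' ρ = Prod.snd '' ρ := by
  rcases hρ.2.1.eq_empty_or_univ htrans with h | h <;>
    rcases hρ.2.2.1.eq_empty_or_univ htrans with h' | h'
  · exact h.trans h'.symm
  · simp [Set.image_eq_empty.mp h]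
  · simp [Set.image_eq_empty.mp h']
  · exact h.trans h'.symm

lemma IsIGElem.eq_diagonal (htrans : α.IsTransitive) {ρ : Set (X × X)} (hρ : IsIGElem α ρ)
    {x : X} (hx : (x, x) ∈ ρ) : ρ = Set.diagonal X := by
  have hdiag : ∀ z, (z, z) ∈ ρ := fun z => by
    obtain ⟨g, hg, rfl⟩ := htrans x z
    exact hρ.2.2.2.2 (x, x) hx g hg
  ext ⟨p, q⟩
  rw [Set.mem_diagonal_iff]
  refine ⟨fun hpq => hρ.1.1 (p, p) (hdiag p) (p, q) hpq rfl, fun h => ?_⟩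
  obtain rfl : p = q := h
  exact hdiag p

lemma isIGElem_diagonal : IsIGElem α (Set.diagonal X) := by
  have hinv : ∀ Y : Set X, Y = Set.univ → AlphaInvariant α Y := by
    rintro Y rfl g _ ⟨x, ⟨-, hx⟩, rfl⟩
    exact ⟨trivial, (α.bijOn g).mapsTo hx⟩
  simp only [IsIGElem, IsPartialBij, Set.mem_diagonal_iff]
  refine ⟨⟨fun p hp q hq h => ?_, fun p hp q hq h => ?_⟩, hinv _ ?_, hinv _ ?_,
    fun p hp g hg => hp ▸ hg, fun p hp g _ => congrArg (α.act g) hp⟩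
  · rw [← hp, h, hq]
  · rw [hp, h, ← hq]
  · exact Set.eq_univ_of_forall fun x => ⟨(x, x), rfl, rfl⟩
  · exact Set.eq_univ_of_forall fun x => ⟨(x, x), rfl, rfl⟩

abbrev IGElems (α : GpdSetAction 𝒢 X) : Type v := {ρ : Set (X × X) // IsIGElem α ρ}

variable {𝒦 : Gpd (IGElems α)} {β : GpdSetAction 𝒦 X}

lemma pair_act_mem_of_mem_car_inv
    (hKinv : ∀ ρ : IGElems α, (𝒦.inv ρ : Set (X × X)) = Prod.swap '' (ρ : Set (X × X)))
    (hβ₁ : ∀ ρ : IGElems α, β.car ρ = Prod.snd '' (ρ : Set (X × X)))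
    (hβ₂ : ∀ ρ : IGElems α, ∀ p ∈ (ρ : Set (X × X)), β.act ρ p.1 = p.2)
    {ρ : IGElems α} {x : X} (hx : x ∈ β.car (𝒦.inv ρ)) : (x, β.act ρ x) ∈ (ρ : Set (X × X)) := by
  rw [hβ₁, hKinv, Set.image_image] at hx
  obtain ⟨⟨u, v⟩, huv, rfl⟩ := hx
  show (u, β.act ρ u) ∈ (ρ : Set (X × X))
  rwa [hβ₂ ρ (u, v) huv]

lemma gkCompat_of_tautological
    (hKinv : ∀ ρ : IGElems α, (𝒦.inv ρ : Set (X × X)) = Prod.swap '' (ρ : Set (X × X)))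
    (hβ₁ : ∀ ρ : IGElems α, β.car ρ = Prod.snd '' (ρ : Set (X × X)))
    (hβ₂ : ∀ ρ : IGElems α, ∀ p ∈ (ρ : Set (X × X)), β.act ρ p.1 = p.2) :
    GKCompat α β where
  alpha_inv g ρ := by
    rintro _ ⟨x, ⟨hxg, hx⟩, rfl⟩
    rw [hβ₁] at hx ⊢
    exact (ρ.2.2.2.1 g ⟨x, ⟨hx, hxg⟩, rfl⟩).symm
  beta_inv g ρ := by
    rintro _ ⟨x, ⟨hxg, hx⟩, rfl⟩
    have h := pair_act_mem_of_mem_car_inv hKinv hβ₁ hβ₂ hx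
    exact ⟨ρ.2.2.2.2.1 _ h g hxg, by rw [hβ₁]; exact ⟨_, h, rfl⟩⟩
  comm g ρ x hx :=
    (hβ₂ ρ _ (ρ.2.2.2.2.2 _ (pair_act_mem_of_mem_car_inv hKinv hβ₁ hβ₂ hx.2) g hx.1)).symm

lemma fullyFaithful_of_tautological (htrans : α.IsTransitive)
    (hKs : ∀ ρ : IGElems α,
      (𝒦.s ρ : Set (X × X)) = {p | p.1 = p.2 ∧ p.1 ∈ Prod.fst '' (ρ : Set (X × X))})
    (hKinv : ∀ ρ : IGElems α, (𝒦.inv ρ : Set (X × X)) = Prod.swap '' (ρ : Set (X × X)))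
    (hβ₁ : ∀ ρ : IGElems α, β.car ρ = Prod.snd '' (ρ : Set (X × X)))
    (hβ₂ : ∀ ρ : IGElems α, ∀ p ∈ (ρ : Set (X × X)), β.act ρ p.1 = p.2) :
    β.FullyFaithful := by
  intro ρ x hx hfix
  have hxx : (x, x) ∈ (ρ : Set (X × X)) := by
    simpa only [hfix] using pair_act_mem_of_mem_car_inv hKinv hβ₁ hβ₂ hx.2
  show 𝒦.s ρ = ρ
  apply Subtype.ext
  rw [hKs, ρ.2.eq_diagonal htrans hxx]
  ext ⟨p, q⟩
  simp [Set.mem_diagonal_iff]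

lemma freeGroupLike_of_tautological (htrans : α.IsTransitive)
    (hKs : ∀ ρ : IGElems α,
      (𝒦.s ρ : Set (X × X)) = {p | p.1 = p.2 ∧ p.1 ∈ Prod.fst '' (ρ : Set (X × X))})
    (hKt : ∀ ρ : IGElems α,
      (𝒦.t ρ : Set (X × X)) = {p | p.1 = p.2 ∧ p.1 ∈ Prod.snd '' (ρ : Set (X × X))})
    (hKinv : ∀ ρ : IGElems α, (𝒦.inv ρ : Set (X × X)) = Prod.swap '' (ρ : Set (X × X)))
    (hβ₁ : ∀ ρ : IGElems α, β.car ρ = Prod.snd '' (ρ : Set (X × X)))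
    (hβ₂ : ∀ ρ : IGElems α, ∀ p ∈ (ρ : Set (X × X)), β.act ρ p.1 = p.2) :
    β.FreeGroupLike where
  car_eq ρ := by
    rw [hβ₁]
    exact (ρ.2.2.2.1.eq_empty_or_univ htrans).symm
  covers x := ⟨⟨Set.diagonal X, isIGElem_diagonal⟩, by rw [hβ₁]; exact ⟨(x, x), rfl, rfl⟩⟩
  s_eq_t κ l hκ hl := by
    apply Subtype.ext
    rw [hKs, hKt, κ.2.image_fst_eq_image_snd htrans, ← hβ₁, ← hβ₁, hκ, hl]
  fullyFaithful := fullyFaithful_of_tautological htrans hKs hKinv hβ₁ hβ₂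

end PartialBijections

theorem duality_theorem_partial_bijections_general
    {G : Type u} (𝒢 : Gpd G) {X : Type v}
    (k : Type*) (A : Type w) [Field k] [Ring A] [Algebra k A] [Finite X]
    (𝒜 : GpdGrading 𝒢 k A)
    (α : GpdSetAction 𝒢 X) (hsplit : α.Split)
    -- the action `α` is transitive
    (htrans : ∀ x y : X, ∃ g, x ∈ α.car (𝒢.inv g) ∧ α.act g x = y)
    -- `𝒦 = I_𝒢(X)` with its groupoid structure of partial bijections
    (𝒦 : Gpd {ρ : Set (X × X) // IsIGElem α ρ})
    (hKs : ∀ ρ : {ρ : Set (X × X) // IsIGElem α ρ},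
      (𝒦.s ρ : Set (X × X)) = {p | p.1 = p.2 ∧ p.1 ∈ Prod.fst '' (ρ : Set (X × X))})
    (hKt : ∀ ρ : {ρ : Set (X × X) // IsIGElem α ρ},
      (𝒦.t ρ : Set (X × X)) = {p | p.1 = p.2 ∧ p.1 ∈ Prod.snd '' (ρ : Set (X × X))})
    (hKinv : ∀ ρ : {ρ : Set (X × X) // IsIGElem α ρ},
      (𝒦.inv ρ : Set (X × X)) = Prod.swap '' (ρ : Set (X × X)))
    -- `β` is the tautological action of `I_𝒢(X)` on `X`: `β_ρ = ρ` on `im(ρ)`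
    (β : GpdSetAction 𝒦 X)
    (hβ₁ : ∀ ρ : {ρ : Set (X × X) // IsIGElem α ρ},
      β.car ρ = Prod.snd '' (ρ : Set (X × X)))
    (hβ₂ : ∀ ρ : {ρ : Set (X × X) // IsIGElem α ρ},
      ∀ p ∈ (ρ : Set (X × X)), β.act ρ p.1 = p.2)
    -- `λ` is the induced `𝒢`-action on the set `O` of `I_𝒢(X)`-orbits
    (lam : GpdSetAction 𝒢 (OrbT β))
    (hlam₁ : ∀ g, lam.car g = {o : OrbT β | ∃ x ∈ α.car g, orbit β x = (o : Set X)}) :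
    -- the action of `I_𝒢(X)` on `X` is fully faithful
    β.FullyFaithful ∧
    -- the duality isomorphism
    SmashDuality k α β 𝒜 lam := by
  have hβ := freeGroupLike_of_tautological htrans hKs hKt hKinv hβ₁ hβ₂
  refine ⟨hβ.fullyFaithful,
    smashDuality_of_freeGroupLike hsplit hβ (gkCompat_of_tautological hKinv hβ₁ hβ₂) ?_⟩
  intro g x hx
  rw [hlam₁]
  exact ⟨x, hx, rfl⟩

/-- Let `X` be a finite split transitive `𝒢`-set (`𝒢₀`
finite) and `A` a unital `𝒢`-graded algebra, and let `I_𝒢(X)` be the groupoid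
of partial bijections of `X` with `α`-invariant domain and image which are
morphisms of `𝒢`-sets, acting on `X` by `β_ρ = ρ` on `Y_ρ = im(ρ)`.
This action is fully faithful and
`(A #_α^𝒢 X) *_γ I_𝒢(X) ≅ End((A #_α^𝒢 X)_{A #_λ^𝒢 O})` as algebras. -/
theorem duality_theorem_partial_bijections
    {G : Type u} (𝒢 : Gpd G) {X : Type v}
    (k : Type*) (A : Type w) [Field k] [Ring A] [Algebra k A] [Finite X]
    (hG₀ : 𝒢.Objs.Finite) (𝒜 : GpdGrading 𝒢 k A)
    (α : GpdSetAction 𝒢 X) (hsplit : α.Split)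
    -- the action `α` is transitive
    (htrans : ∀ x y : X, ∃ g, x ∈ α.car (𝒢.inv g) ∧ α.act g x = y)
    -- `𝒦 = I_𝒢(X)` with its groupoid structure of partial bijections
    (𝒦 : Gpd {ρ : Set (X × X) // IsIGElem α ρ})
    (hKs : ∀ ρ : {ρ : Set (X × X) // IsIGElem α ρ},
      (𝒦.s ρ : Set (X × X)) = {p | p.1 = p.2 ∧ p.1 ∈ Prod.fst '' (ρ : Set (X × X))})
    (hKt : ∀ ρ : {ρ : Set (X × X) // IsIGElem α ρ},
      (𝒦.t ρ : Set (X × X)) = {p | p.1 = p.2 ∧ p.1 ∈ Prod.snd '' (ρ : Set (X × X))})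
    (hKinv : ∀ ρ : {ρ : Set (X × X) // IsIGElem α ρ},
      (𝒦.inv ρ : Set (X × X)) = Prod.swap '' (ρ : Set (X × X)))
    (hKmul : ∀ ρ σ : {ρ : Set (X × X) // IsIGElem α ρ}, 𝒦.s ρ = 𝒦.t σ →
      (𝒦.mul ρ σ : Set (X × X)) =
        {p : X × X | ∃ y, (p.1, y) ∈ (σ : Set (X × X)) ∧ (y, p.2) ∈ (ρ : Set (X × X))})
    -- `β` is the tautological action of `I_𝒢(X)` on `X`: `β_ρ = ρ` on `im(ρ)`
    (β : GpdSetAction 𝒦 X)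
    (hβ₁ : ∀ ρ : {ρ : Set (X × X) // IsIGElem α ρ},
      β.car ρ = Prod.snd '' (ρ : Set (X × X)))
    (hβ₂ : ∀ ρ : {ρ : Set (X × X) // IsIGElem α ρ},
      ∀ p ∈ (ρ : Set (X × X)), β.act ρ p.1 = p.2)
    -- `λ` is the induced `𝒢`-action on the set `O` of `I_𝒢(X)`-orbits
    (lam : GpdSetAction 𝒢 (OrbT β))
    (hlam₁ : ∀ g, lam.car g = {o : OrbT β | ∃ x ∈ α.car g, orbit β x = (o : Set X)})
    (hlam₂ : ∀ g, ∀ x ∈ α.car (𝒢.inv g), lam.act g (orbMap β x) = orbMap β (α.act g x)) :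
    -- the action of `I_𝒢(X)` on `X` is fully faithful
    β.FullyFaithful ∧
    -- the duality isomorphism
    SmashDuality k α β 𝒜 lam :=
  duality_theorem_partial_bijections_general 𝒢 k A 𝒜 α hsplit htrans 𝒦 hKs hKt hKinv β hβ₁ hβ₂ lam
    hlam₁


end
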